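/- arXiv:2306.09221 — 10 statements merged into one kernel-verified Lean document; each statement's English description precedes it below -/
import Mathlib

section
/- Any solution x of the quasispecies equations for the sharp peak fitness function satisfies the representation formula: for every genotype u, x(u) = Σ_{n≥1} ((λ−1)/λⁿ)·(Mⁿ)(w*,u), where λ = Σ_v x(v) f(v) is the mean fitness and Mⁿ is the n-th matrix power of M. (In particular λ > 1, so the series converges.) -/
open scoped BigOperators
open Finset Filter

/-- Representation formula for the quasispecies on the sharp peak landscape:
any solution `x` of the quasispecies equations satisfies
`x u = ∑_{n ≥ 1} ((λ-1)/λ^n) (Mⁿ)(w*, u)`, where `λ > 1` is the mean fitness. -/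
theorem quasispecies_representation_sharp_peak
    (E : Type*) [Fintype E] [DecidableEq E] [Nonempty E]
    (M : Matrix E E ℝ) (hMpos : ∀ u v, 0 < M u v) (hMrow : ∀ u, ∑ v, M u v = 1)
    (σ : ℝ) (hσ : 1 < σ) (wstar : E)
    (f : E → ℝ) (hf : ∀ u, f u = if u = wstar then σ else 1)
    (x : E → ℝ) (hx0 : ∀ u, 0 ≤ x u) (hx1 : ∑ u, x u = 1)
    (hqs : ∀ u, x u * (∑ v, x v * f v) = ∑ v, x v * f v * M v u)
    (lam : ℝ) (hlam : lam = ∑ v, x v * f v) :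
    1 < lam ∧
      ∀ u, x u = ∑' n : ℕ, ((lam - 1) / lam ^ (n + 1)) * (M ^ (n + 1)) wstar u := by
  have hfpos : ∀ v, 0 < f v := by
    intro v; rw [hf]; split <;> linarith
  -- lam = 1 + (σ-1) * x wstar
  have hlam2 : lam = 1 + (σ - 1) * x wstar := by
    rw [hlam]
    have h1 : ∀ v ∈ Finset.univ, x v * f v
        = x v + (if v = wstar then (σ - 1) * x v else 0) := by
      intro v _; rw [hf]; split <;> ring
    rw [Finset.sum_congr rfl h1, Finset.sum_add_distrib, hx1,
      Finset.sum_ite_eq' Finset.univ wstar (fun v => (σ - 1) * x v)]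
    simp
  -- x wstar > 0
  have hxw : 0 < x wstar := by
    rcases lt_or_eq_of_le (hx0 wstar) with h | h
    · exact h
    · exfalso
      have hlam1 : lam = 1 := by rw [hlam2, ← h]; ring
      obtain ⟨v, hv⟩ : ∃ v, 0 < x v := by
        by_contra h'
        push_neg at h'
        have : ∑ u, x u = 0 :=
          Finset.sum_eq_zero (fun u _ => le_antisymm (h' u) (hx0 u))
        linarith
      have hq := hqs wstar
      rw [← hlam, hlam1] at hq
      have hpos : 0 < ∑ w, x w * f w * M w wstar := by
        apply Finset.sum_pos'
        · intro w _
          exact mul_nonneg (mul_nonneg (hx0 w) (hfpos w).le) (hMpos w wstar).le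
        · exact ⟨v, Finset.mem_univ v, mul_pos (mul_pos hv (hfpos v)) (hMpos v wstar)⟩
      rw [← hq] at hpos
      rw [← h] at hpos
      simp at hpos
  have hlam1 : 1 < lam := by
    rw [hlam2]; nlinarith
  have hlampos : (0:ℝ) < lam := by linarith
  -- key recursion
  have hkey : ∀ u, ∑ v, x v * M v u = lam * x u - (lam - 1) * M wstar u := by
    intro u
    have hq := hqs u
    rw [← hlam] at hq
    have h1 : ∀ v ∈ Finset.univ, x v * f v * M v u
        = x v * M v u + (if v = wstar then (σ - 1) * x v * M v u else 0) := by
      intro v _; rw [hf]; split <;> ring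
    rw [Finset.sum_congr rfl h1, Finset.sum_add_distrib,
      Finset.sum_ite_eq' Finset.univ wstar (fun v => (σ - 1) * x v * M v u)] at hq
    simp only [Finset.mem_univ, if_true] at hq
    have h2 : (σ - 1) * x wstar * M wstar u = (lam - 1) * M wstar u := by
      have h3 : (σ - 1) * x wstar = lam - 1 := by rw [hlam2]; ring
      rw [h3]
    linarith
  -- nonnegativity of powers
  have hpow_nonneg : ∀ n (v u : E), 0 ≤ (M ^ n) v u := by
    intro n
    induction n with
    | zero => intro v u; simp [Matrix.one_apply]; split <;> norm_num
    | succ n ih =>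
      intro v u
      rw [pow_succ, Matrix.mul_apply]
      exact Finset.sum_nonneg fun w _ => mul_nonneg (ih v w) (hMpos w u).le
  have hpow_row : ∀ n (v : E), ∑ u, (M ^ n) v u = 1 := by
    intro n
    induction n with
    | zero => intro v; simp [Matrix.one_apply]
    | succ n ih =>
      intro v
      simp only [pow_succ, Matrix.mul_apply]
      rw [Finset.sum_comm]
      have : ∀ w ∈ Finset.univ, ∑ u, (M ^ n) v w * M w u = (M ^ n) v w := by
        intro w _
        rw [← Finset.mul_sum, hMrow w, mul_one]
      rw [Finset.sum_congr rfl this, ih v]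
  have hpow_le_one : ∀ n (v u : E), (M ^ n) v u ≤ 1 := by
    intro n v u
    calc (M ^ n) v u ≤ ∑ u', (M ^ n) v u' :=
          Finset.single_le_sum (fun u' _ => hpow_nonneg n v u') (Finset.mem_univ u)
      _ = 1 := hpow_row n v
  -- y n u := (x Mⁿ)(u)
  set y : ℕ → E → ℝ := fun n u => ∑ v, x v * (M ^ n) v u with hy
  have hy0 : ∀ u, y 0 u = x u := by
    intro u
    simp [hy, Matrix.one_apply, mul_ite]
  have hyrec : ∀ n u, y (n + 1) u = lam * y n u - (lam - 1) * (M ^ (n + 1)) wstar u := by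
    intro n u
    have h1 : y (n + 1) u = ∑ w, (∑ v, x v * M v w) * (M ^ n) w u := by
      simp only [hy, pow_succ', Matrix.mul_apply, Finset.mul_sum, Finset.sum_mul]
      rw [Finset.sum_comm]
      apply Finset.sum_congr rfl; intro w _
      apply Finset.sum_congr rfl; intro v _
      ring
    rw [h1]
    have h2 : ∀ w ∈ Finset.univ, (∑ v, x v * M v w) * (M ^ n) w u
        = lam * (x w * (M ^ n) w u) - (lam - 1) * (M wstar w * (M ^ n) w u) := by
      intro w _; rw [hkey w]; ring
    rw [Finset.sum_congr rfl h2, Finset.sum_sub_distrib, ← Finset.mul_sum, ← Finset.mul_sum]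
    have h3 : (M ^ (n + 1)) wstar u = ∑ w, M wstar w * (M ^ n) w u := by
      rw [pow_succ', Matrix.mul_apply]
    rw [h3]
  have hynn : ∀ n u, 0 ≤ y n u := fun n u =>
    Finset.sum_nonneg fun v _ => mul_nonneg (hx0 v) (hpow_nonneg n v u)
  have hyle : ∀ n u, y n u ≤ 1 := by
    intro n u
    calc y n u ≤ ∑ v, x v * 1 :=
          Finset.sum_le_sum fun v _ =>
            mul_le_mul_of_nonneg_left (hpow_le_one n v u) (hx0 v)
      _ = 1 := by simp [hx1]
  -- the partial-sum identity
  have hmain : ∀ N (u : E),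
      ∑ n ∈ Finset.range N, ((lam - 1) / lam ^ (n + 1)) * (M ^ (n + 1)) wstar u
        = x u - y N u / lam ^ N := by
    intro N u
    induction N with
    | zero => simp [hy0]
    | succ N ih =>
      rw [Finset.sum_range_succ, ih, hyrec N u]
      have hN : (lam : ℝ) ^ N ≠ 0 := pow_ne_zero _ (ne_of_gt hlampos)
      have hN1 : (lam : ℝ) ^ (N + 1) ≠ 0 := pow_ne_zero _ (ne_of_gt hlampos)
      field_simp
      ring
  refine ⟨hlam1, fun u => ?_⟩
  -- the terms are nonneg
  have hterm : ∀ n : ℕ, 0 ≤ ((lam - 1) / lam ^ (n + 1)) * (M ^ (n + 1)) wstar u := by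
    intro n
    apply mul_nonneg _ (hpow_nonneg (n + 1) wstar u)
    apply div_nonneg (by linarith) (pow_nonneg hlampos.le _)
  -- tendsto of remainder
  have hrem : Tendsto (fun N => y N u / lam ^ N) atTop (nhds 0) := by
    have hgeo : Tendsto (fun N : ℕ => (1 / lam) ^ N) atTop (nhds 0) := by
      apply tendsto_pow_atTop_nhds_zero_of_lt_one
      · positivity
      · rw [div_lt_one hlampos]; exact hlam1
    apply squeeze_zero (fun N => div_nonneg (hynn N u) (pow_nonneg hlampos.le N)) _ hgeo
    intro N
    rw [div_pow, one_pow]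
    exact div_le_div₀ zero_le_one (hyle N u) (pow_pos hlampos N) le_rfl
  have hsum : HasSum (fun n : ℕ => ((lam - 1) / lam ^ (n + 1)) * (M ^ (n + 1)) wstar u)
      (x u) := by
    rw [hasSum_iff_tendsto_nat_of_nonneg hterm]
    have : (fun N => ∑ n ∈ Finset.range N,
        ((lam - 1) / lam ^ (n + 1)) * (M ^ (n + 1)) wstar u)
        = fun N => x u - y N u / lam ^ N := by
      funext N; exact hmain N u
    rw [this]
    have := (tendsto_const_nhds (x := x u) (f := atTop (α := ℕ))).sub hrem
    simpa using this
  exact hsum.tsum_eq.symm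
end

section
/- There exists exactly one real number λ in the interval (1, σ] satisfying the equation 1/(σ−1) = Σ_{n≥1} λ^{−n} (Mⁿ)(w*,w*), where Mⁿ is the n-th matrix power of M; moreover the mean fitness of any quasispecies solution for the sharp peak fitness function satisfies this equation. -/
/-!
For the sharp peak the mean fitness is `λ = 1 + (σ - 1) x(w*)`, and the quasispecies equation
reads `x (λ - M) = (λ - 1) M_{w*}`. As `M` is stochastic and `λ > 1`, expanding `(λ - M)⁻¹` in its
Neumann series and taking the `w*` coordinate gives `x(w*) = (λ - 1) G(λ)` with
`G(λ) = ∑ λ^{-(n+1)} (M^{n+1})(w*,w*)`; comparing with `x(w*) = (λ - 1)/(σ - 1)` yields the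
equation. Since `c/(λ - 1) ≤ G(λ) ≤ 1/(λ - 1)` for `c = min_u M(u,w*) > 0` and `G` is continuous
and strictly decreasing on `(1, ∞)`, the equation `G(λ) = 1/(σ - 1)` has exactly one root in
`(1, σ]`.
-/

open Finset Filter Topology Matrix

noncomputable def inversePowerSeries (p : ℕ → ℝ) (lam : ℝ) : ℝ :=
  ∑' n : ℕ, (lam ^ (n + 1))⁻¹ * p n

section InversePowerSeries

variable {p : ℕ → ℝ} {lam C : ℝ}

lemma hasSum_inv_pow_succ (hlam : 1 < lam) :
    HasSum (fun n : ℕ => (lam ^ (n + 1))⁻¹) (lam - 1)⁻¹ := by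
  have hinv : lam⁻¹ < 1 := inv_lt_one_of_one_lt₀ hlam
  have hsum := (hasSum_geometric_of_lt_one (by positivity) hinv).mul_left lam⁻¹
  have hval : lam⁻¹ * (1 - lam⁻¹)⁻¹ = (lam - 1)⁻¹ := by
    rw [← mul_inv, mul_sub, mul_one, mul_inv_cancel₀ (by positivity : lam ≠ 0)]
  simpa only [hval, ← inv_pow, ← pow_succ'] using hsum

lemma summable_inversePowerSeries (hp : ∀ n, |p n| ≤ C) (hlam : 1 < lam) :
    Summable fun n : ℕ => (lam ^ (n + 1))⁻¹ * p n := by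
  refine Summable.of_norm_bounded ((hasSum_inv_pow_succ hlam).summable.mul_right C) fun n => ?_
  rw [Real.norm_eq_abs, abs_mul, abs_of_pos (by positivity)]
  exact mul_le_mul_of_nonneg_left (hp n) (by positivity)

lemma le_inversePowerSeries (hp : ∀ n, |p n| ≤ C) (hlam : 1 < lam) {c : ℝ}
    (hc : ∀ n, c ≤ p n) : c / (lam - 1) ≤ inversePowerSeries p lam := by
  rw [div_eq_mul_inv, mul_comm]
  exact hasSum_le (fun n => mul_le_mul_of_nonneg_left (hc n) (by positivity))
    ((hasSum_inv_pow_succ hlam).mul_right c) (summable_inversePowerSeries hp hlam).hasSum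

lemma inversePowerSeries_le (hp : ∀ n, |p n| ≤ C) (hlam : 1 < lam) {d : ℝ}
    (hd : ∀ n, p n ≤ d) : inversePowerSeries p lam ≤ d / (lam - 1) := by
  rw [div_eq_mul_inv, mul_comm]
  exact hasSum_le (fun n => mul_le_mul_of_nonneg_left (hd n) (by positivity))
    (summable_inversePowerSeries hp hlam).hasSum ((hasSum_inv_pow_succ hlam).mul_right d)

lemma continuousOn_inversePowerSeries (hp : ∀ n, |p n| ≤ C) {a : ℝ} (ha : 1 < a) :
    ContinuousOn (inversePowerSeries p) (Set.Ici a) := by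
  refine continuousOn_tsum (fun n => ?_) ((hasSum_inv_pow_succ ha).summable.mul_right C)
    fun n l hl => ?_
  · refine ((continuousOn_pow _).inv₀ fun l hl => ?_).mul continuousOn_const
    have : 0 < l := by linarith [Set.mem_Ici.1 hl]
    positivity
  · have hl : a ≤ l := hl
    have ha0 : 0 < a := by linarith
    have : 0 < l := by linarith
    rw [Real.norm_eq_abs, abs_mul, abs_of_pos (by positivity)]
    exact mul_le_mul (inv_anti₀ (by positivity) (pow_le_pow_left₀ ha0.le hl _)) (hp n)
      (abs_nonneg _) (by positivity)

lemma strictAntiOn_inversePowerSeries (hp : ∀ n, |p n| ≤ C) (hp0 : ∀ n, 0 ≤ p n)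
    (hpos : 0 < p 0) : StrictAntiOn (inversePowerSeries p) (Set.Ioi 1) := by
  intro a ha b hb hab
  have ha0 : 0 < a := by linarith [Set.mem_Ioi.1 ha]
  refine (summable_inversePowerSeries hp hb).tsum_lt_tsum (i := 0) (fun n => ?_) ?_
    (summable_inversePowerSeries hp ha)
  · exact mul_le_mul_of_nonneg_right
      (inv_anti₀ (by positivity) (pow_le_pow_left₀ ha0.le hab.le _)) (hp0 n)
  · exact mul_lt_mul_of_pos_right
      (inv_strictAnti₀ (by positivity) (pow_lt_pow_left₀ hab ha0.le (by norm_num))) hpos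

end InversePowerSeries

lemma existsUnique_inversePowerSeries_eq {p : ℕ → ℝ} {c σ : ℝ} (hc : 0 < c)
    (hcp : ∀ n, c ≤ p n) (hp1 : ∀ n, p n ≤ 1) (hσ : 1 < σ) :
    ∃! lam, lam ∈ Set.Ioc 1 σ ∧ 1 / (σ - 1) = inversePowerSeries p lam := by
  have hp : ∀ n, |p n| ≤ 1 := fun n => abs_le.2 ⟨by linarith [hcp n], hp1 n⟩
  have hc1 : c ≤ 1 := (hcp 0).trans (hp1 0)
  -- at `lam₀` the lower bound `c / (lam₀ - 1)` equals `1 / (σ - 1)`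
  set lam₀ := 1 + c * (σ - 1)
  have hlam₀ : 1 < lam₀ := by nlinarith
  have hlam₀σ : lam₀ ≤ σ := by nlinarith
  have hσval : inversePowerSeries p σ ≤ 1 / (σ - 1) := inversePowerSeries_le hp hσ hp1
  have hlam₀val : 1 / (σ - 1) ≤ inversePowerSeries p lam₀ := by
    convert le_inversePowerSeries hp hlam₀ hcp using 1
    rw [show lam₀ - 1 = c * (σ - 1) by simp only [lam₀]; ring, div_mul_cancel_left₀ hc.ne',
      one_div]
  obtain ⟨lam, hlam, hval⟩ := intermediate_value_Icc' hlam₀σ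
    ((continuousOn_inversePowerSeries hp hlam₀).mono Set.Icc_subset_Ici_self) ⟨hσval, hlam₀val⟩
  refine ⟨lam, ⟨⟨hlam₀.trans_le hlam.1, hlam.2⟩, hval.symm⟩, fun μ hμ => ?_⟩
  exact (strictAntiOn_inversePowerSeries hp (fun n => hc.le.trans (hcp n))
    (hc.trans_le (hcp 0))).injOn hμ.1.1 (hlam₀.trans_le hlam.1) (hμ.2.symm.trans hval.symm)

section Telescoping

variable {𝕜 ι : Type*} [NormedField 𝕜] [Fintype ι] [DecidableEq ι]
  {A : Matrix ι ι 𝕜} {y b : ι → 𝕜} {lam : 𝕜}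

lemma vecMul_pow_of_vecMul_eq_smul_sub (hy : y ᵥ* A = lam • y - b) (n : ℕ) :
    b ᵥ* A ^ n = lam • (y ᵥ* A ^ n) - y ᵥ* A ^ (n + 1) := by
  rw [pow_succ', ← vecMul_vecMul, hy, sub_vecMul, smul_vecMul]
  abel

/-- The row-vector form of the Neumann series `y = b (lam - A)⁻¹ = ∑ lam^{-(n+1)} b Aⁿ`. -/
lemma tendsto_sum_of_vecMul_eq_smul_sub (hy : y ᵥ* A = lam • y - b) (hlam : 1 < ‖lam‖)
    {C : ℝ} (hC : ∀ n, ‖y ᵥ* A ^ n‖ ≤ C) :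
    Tendsto (fun N => ∑ n ∈ range N, (lam ^ (n + 1))⁻¹ • (b ᵥ* A ^ n)) atTop (𝓝 y) := by
  have hlam0 : lam ≠ 0 := norm_pos_iff.1 (one_pos.trans hlam)
  set v : ℕ → ι → 𝕜 := fun n => (lam ^ n)⁻¹ • (y ᵥ* A ^ n)
  have hterm : ∀ n, (lam ^ (n + 1))⁻¹ • (b ᵥ* A ^ n) = v n - v (n + 1) := by
    intro n
    have hscalar : (lam ^ (n + 1))⁻¹ * lam = (lam ^ n)⁻¹ := by
      rw [pow_succ, mul_inv, inv_mul_cancel_right₀ hlam0]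
    rw [vecMul_pow_of_vecMul_eq_smul_sub hy, smul_sub, smul_smul, hscalar]
  have hv : Tendsto v atTop (𝓝 0) := by
    refine squeeze_zero_norm (fun n => ?_) (by simpa using (tendsto_pow_atTop_nhds_zero_of_lt_one
      (by positivity) (inv_lt_one_of_one_lt₀ hlam)).mul_const C)
    rw [norm_smul, norm_inv, norm_pow, ← inv_pow]
    exact mul_le_mul_of_nonneg_left (hC n) (by positivity)
  simp only [hterm, sum_range_sub']
  simpa [v] using hv.const_sub (v 0)

end Telescoping

section Stochastic

variable {E : Type*} [Fintype E] {x : E → ℝ}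

lemma le_vecMul_apply_of_le (hx0 : ∀ i, 0 ≤ x i) (hx1 : ∑ i, x i = 1) {A : Matrix E E ℝ}
    {j : E} {c : ℝ} (hc : ∀ i, c ≤ A i j) : c ≤ (x ᵥ* A) j :=
  calc c = ∑ i, x i * c := by rw [← sum_mul, hx1, one_mul]
    _ ≤ ∑ i, x i * A i j := sum_le_sum fun i _ => mul_le_mul_of_nonneg_left (hc i) (hx0 i)

variable [DecidableEq E]

lemma le_pow_succ_apply_of_le {M : Matrix E E ℝ} (hM : M ∈ rowStochastic ℝ E) {j : E} {c : ℝ}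
    (hc : ∀ u, c ≤ M u j) (n : ℕ) (i : E) : c ≤ (M ^ (n + 1)) i j := by
  rw [pow_succ, mul_apply_eq_vecMul]
  exact le_vecMul_apply_of_le (fun _ => nonneg_of_mem_rowStochastic (pow_mem hM n))
    (sum_row_of_mem_rowStochastic (pow_mem hM n) i) hc

lemma norm_vecMul_le_one_of_mem_rowStochastic {P : Matrix E E ℝ} (hP : P ∈ rowStochastic ℝ E)
    (hx0 : ∀ i, 0 ≤ x i) (hx1 : ∑ i, x i = 1) : ‖x ᵥ* P‖ ≤ 1 := by
  refine (pi_norm_le_iff_of_nonneg zero_le_one).2 fun j => ?_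
  rw [Real.norm_eq_abs, abs_of_nonneg (nonneg_vecMul_of_mem_rowStochastic hP hx0 j)]
  calc (x ᵥ* P) j ≤ ∑ i, x i * 1 :=
        sum_le_sum fun i _ => mul_le_mul_of_nonneg_left (le_one_of_mem_rowStochastic hP) (hx0 i)
    _ = 1 := by simp only [mul_one, hx1]

lemma apply_eq_mul_inversePowerSeries {M : Matrix E E ℝ} (hM : M ∈ rowStochastic ℝ E)
    (hx0 : ∀ i, 0 ≤ x i) (hx1 : ∑ i, x i = 1) {w : E} {lam : ℝ} (hlam : 1 < lam)
    (hx : x ᵥ* M = lam • x - (lam - 1) • M w) :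
    x w = (lam - 1) * inversePowerSeries (fun n => (M ^ (n + 1)) w w) lam := by
  have hp : ∀ n, |(M ^ (n + 1)) w w| ≤ 1 := fun n =>
    abs_le.2 ⟨by linarith [nonneg_of_mem_rowStochastic (pow_mem hM (n + 1)) (i := w) (j := w)],
      le_one_of_mem_rowStochastic (pow_mem hM _)⟩
  have hseries := tendsto_pi_nhds.1 (tendsto_sum_of_vecMul_eq_smul_sub hx
    (by rwa [Real.norm_eq_abs, abs_of_pos (one_pos.trans hlam)])
    fun n => norm_vecMul_le_one_of_mem_rowStochastic (pow_mem hM n) hx0 hx1) w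
  have hsum : HasSum (fun n => (lam - 1) * ((lam ^ (n + 1))⁻¹ * (M ^ (n + 1)) w w))
      ((lam - 1) * inversePowerSeries (fun n => (M ^ (n + 1)) w w) lam) :=
    (summable_inversePowerSeries hp hlam).hasSum.mul_left _
  refine tendsto_nhds_unique hseries ?_
  convert hsum.tendsto_sum_nat using 2 with N
  simp only [Finset.sum_apply, Pi.smul_apply, smul_vecMul, pow_succ', mul_apply_eq_vecMul,
    smul_eq_mul]
  exact sum_congr rfl fun n _ => by ring

end Stochastic

section SharpPeak

variable {E : Type*} [DecidableEq E] {f : E → ℝ} {σ : ℝ} {w : E} {x : E → ℝ}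

lemma mul_sharpPeak_apply (hf : ∀ u, f u = if u = w then σ else 1) (v : E) :
    x v * f v = x v + (Pi.single w ((σ - 1) * x w) : E → ℝ) v := by
  by_cases hv : v = w
  · subst hv
    simp only [hf, if_pos, Pi.single_eq_same]
    ring
  · simp [hf, hv]

variable [Fintype E]

lemma sum_mul_sharpPeak (hf : ∀ u, f u = if u = w then σ else 1) (hx1 : ∑ u, x u = 1) :
    ∑ v, x v * f v = 1 + (σ - 1) * x w := by
  simp only [mul_sharpPeak_apply hf, sum_add_distrib, hx1, sum_pi_single', mem_univ, if_true]

lemma vecMul_eq_of_quasispecies_sharpPeak (hf : ∀ u, f u = if u = w then σ else 1)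
    (hx1 : ∑ u, x u = 1) {M : Matrix E E ℝ}
    (hq : ∀ u, x u * (∑ v, x v * f v) = ∑ v, x v * f v * M v u) :
    x ᵥ* M = (∑ v, x v * f v) • x - (∑ v, x v * f v - 1) • M w := by
  have hfx : (fun v => x v * f v) ᵥ* M = (∑ v, x v * f v) • x :=
    funext fun u => (hq u).symm.trans (mul_comm _ _)
  rw [sum_mul_sharpPeak hf hx1] at hfx ⊢
  rw [show (fun v => x v * f v) = x + Pi.single w ((σ - 1) * x w) from
    funext (mul_sharpPeak_apply hf), add_vecMul, single_vecMul] at hfx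
  rw [← hfx, add_sub_cancel_left]
  exact (add_sub_cancel_right _ _).symm

end SharpPeak

theorem mean_fitness_equation_sharp_peak_general
    (E : Type*) [Fintype E] [DecidableEq E]
    (M : Matrix E E ℝ) (hMpos : ∀ u v, 0 < M u v) (hMrow : ∀ u, ∑ v, M u v = 1)
    (σ : ℝ) (hσ : 1 < σ) (wstar : E)
    (f : E → ℝ) (hf : ∀ u, f u = if u = wstar then σ else 1) :
    (∃! lam : ℝ, lam ∈ Set.Ioc 1 σ ∧
        1 / (σ - 1) = ∑' n : ℕ, (lam ^ (n + 1))⁻¹ * (M ^ (n + 1)) wstar wstar) ∧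
      (∀ x : E → ℝ, (∀ u, 0 ≤ x u) → (∑ u, x u) = 1 →
        (∀ u, x u * (∑ v, x v * f v) = ∑ v, x v * f v * M v u) →
        (∑ v, x v * f v) ∈ Set.Ioc 1 σ ∧
          1 / (σ - 1) =
            ∑' n : ℕ, ((∑ v, x v * f v) ^ (n + 1))⁻¹ * (M ^ (n + 1)) wstar wstar) := by
  have hM : M ∈ rowStochastic ℝ E := mem_rowStochastic_iff_sum.2 ⟨fun u v => (hMpos u v).le, hMrow⟩
  have : Nonempty E := ⟨wstar⟩
  obtain ⟨u₀, hu₀⟩ := Finite.exists_min fun u => M u wstar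
  refine ⟨existsUnique_inversePowerSeries_eq (hMpos u₀ wstar)
    (fun n => le_pow_succ_apply_of_le hM hu₀ n wstar)
    (fun n => le_one_of_mem_rowStochastic (pow_mem hM _)) hσ, fun x hx0 hx1 hq => ?_⟩
  have hlam := sum_mul_sharpPeak hf hx1
  have hx := vecMul_eq_of_quasispecies_sharpPeak hf hx1 hq
  set lam := ∑ v, x v * f v
  -- `x wstar = 0` would force `lam = 1` and hence `(x ᵥ* M) wstar = 0`
  have hxw : 0 < x wstar := by
    refine (hx0 wstar).lt_of_ne fun h => ?_
    have := congrFun hx wstar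
    simp only [Pi.sub_apply, Pi.smul_apply, smul_eq_mul, hlam, ← h] at this
    linarith [le_vecMul_apply_of_le hx0 hx1 hu₀, hMpos u₀ wstar]
  have hxw1 : x wstar ≤ 1 := hx1 ▸ single_le_sum (fun u _ => hx0 u) (mem_univ wstar)
  have hlam1 : 1 < lam := by rw [hlam]; nlinarith
  refine ⟨⟨hlam1, by rw [hlam]; nlinarith⟩, ?_⟩
  have hseries := apply_eq_mul_inversePowerSeries hM hx0 hx1 hlam1 hx
  rw [show lam - 1 = (σ - 1) * x wstar by rw [hlam]; ring] at hseries
  change 1 / (σ - 1) = inversePowerSeries _ lam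
  rw [div_eq_iff (by linarith)]
  exact mul_left_cancel₀ hxw.ne' (by linear_combination hseries)

/-- There is exactly one `λ ∈ (1, σ]` satisfying
`1/(σ-1) = ∑_{n ≥ 1} λ^{-n} (Mⁿ)(w*,w*)`; moreover the mean fitness of any
quasispecies solution for the sharp peak fitness function satisfies this equation. -/
theorem mean_fitness_equation_sharp_peak
    (E : Type*) [Fintype E] [DecidableEq E] [Nonempty E]
    (M : Matrix E E ℝ) (hMpos : ∀ u v, 0 < M u v) (hMrow : ∀ u, ∑ v, M u v = 1)
    (σ : ℝ) (hσ : 1 < σ) (wstar : E)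
    (f : E → ℝ) (hf : ∀ u, f u = if u = wstar then σ else 1) :
    (∃! lam : ℝ, lam ∈ Set.Ioc 1 σ ∧
        1 / (σ - 1) = ∑' n : ℕ, (lam ^ (n + 1))⁻¹ * (M ^ (n + 1)) wstar wstar) ∧
      (∀ x : E → ℝ, (∀ u, 0 ≤ x u) → (∑ u, x u) = 1 →
        (∀ u, x u * (∑ v, x v * f v) = ∑ v, x v * f v * M v u) →
        (∑ v, x v * f v) ∈ Set.Ioc 1 σ ∧
          1 / (σ - 1) =
            ∑' n : ℕ, ((∑ v, x v * f v) ^ (n + 1))⁻¹ * (M ^ (n + 1)) wstar wstar) :=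
  mean_fitness_equation_sharp_peak_general E M hMpos hMrow σ hσ wstar f hf
end

section
/- The mean fitness λ of any quasispecies solution for the sharp peak fitness function on E = 𝒜^ℓ satisfies the identity 1/(σ−1) = κ^{−ℓ} Σ_{k=0}^{ℓ} C(ℓ,k) (κ−1)^k · 1/(λ/ρ^k − 1), where C(ℓ,k) is the binomial coefficient and ρ = 1 − κq/(κ−1). -/
/-!
The mutation matrix is the `ℓ`-fold tensor power of the one-site kernel
`a b ↦ if a = b then 1 - q else q / (κ - 1)`, whose centered indicators `[· = a] - 1/κ` are
eigenvectors with eigenvalue `ρ`. Hence `φ_T(u) = ∏_{i ∈ T} ([u_i = w*_i] - 1/κ)` is an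
eigenvector of `M` with eigenvalue `ρ^|T|`. Pairing the quasispecies equation with `φ_T` gives
`(λ - ρ^|T|) ⟨x, φ_T⟩ = ρ^|T| (σ - 1) x(w*) φ_T(w*)`, while expanding the indicator of `w*` in the
`φ_T` gives `x(w*) = ∑_T κ^(|T| - ℓ) ⟨x, φ_T⟩`. Substituting, cancelling `x(w*) > 0` and grouping
the `T` by size gives the equation.
-/

open Finset Matrix

def sharpPeak {E R : Type*} [DecidableEq E] [One R] (w : E) (σ : R) : E → R :=
  fun u => if u = w then σ else 1

def siteKernel {A R : Type*} [DecidableEq A] (α β : R) : Matrix A A R :=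
  Matrix.of fun a b => if a = b then β else α

def prodKernel {ι A R : Type*} [Fintype ι] [CommMonoid R] (m : Matrix A A R) :
    Matrix (ι → A) (ι → A) R :=
  Matrix.of fun v u => ∏ i, m (v i) (u i)

noncomputable def centeredIndicator {A : Type*} [Fintype A] [DecidableEq A] (a : A) : A → ℝ :=
  fun b => (if b = a then 1 else 0) - (Fintype.card A : ℝ)⁻¹

section Kernels

variable {ι A R : Type*} [Fintype ι] [CommRing R]

theorem prodKernel_siteKernel_apply [DecidableEq A] (α β : R) (v u : ι → A) :
    prodKernel (siteKernel α β) v u =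
      α ^ hammingDist v u * β ^ (Fintype.card ι - hammingDist v u) := by
  have hcard := card_filter_add_card_filter_not (s := univ) fun i => v i = u i
  rw [card_univ] at hcard
  simp only [prodKernel, siteKernel, of_apply, prod_ite, prod_const, hammingDist, ne_eq]
  rw [mul_comm]
  congr 2
  omega

theorem siteKernel_mulVec_apply [Fintype A] [DecidableEq A] (α β : R) (g : A → R) (a : A) :
    (siteKernel α β *ᵥ g) a = α * ∑ b, g b + (β - α) * g a := by
  have hsplit : ∀ b, (if a = b then β else α) * g b =
      α * g b + if a = b then (β - α) * g b else 0 := by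
    intro b
    split_ifs <;> ring
  simp [mulVec, dotProduct, siteKernel, hsplit, sum_add_distrib, mul_sum]

theorem sum_siteKernel_apply [Fintype A] [DecidableEq A] (α β : R) (a : A) :
    ∑ b, siteKernel α β a b = (Fintype.card A - 1) * α + β := by
  have h := siteKernel_mulVec_apply α β (1 : A → R) a
  simp only [mulVec, dotProduct, Pi.one_apply, mul_one, sum_const, card_univ, nsmul_eq_mul] at h
  rw [h]
  ring

theorem siteKernel_mulVec_centeredIndicator [Fintype A] [DecidableEq A] [Nonempty A]
    (α β : ℝ) (a : A) :
    siteKernel α β *ᵥ centeredIndicator a = (β - α) • centeredIndicator a := by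
  have hsum : ∑ b, centeredIndicator a b = 0 := by
    simp [centeredIndicator, sum_sub_distrib]
  ext b
  rw [siteKernel_mulVec_apply, hsum, mul_zero, zero_add, Pi.smul_apply, smul_eq_mul]

variable [DecidableEq ι]

theorem prodKernel_mulVec_prod [Fintype A] {m : Matrix A A R} (hm : ∀ a, ∑ b, m a b = 1)
    {ρ : R} {e : ι → A → R} (he : ∀ i, m *ᵥ e i = ρ • e i) (T : Finset ι) :
    prodKernel m *ᵥ (fun u => ∏ i ∈ T, e i (u i)) = ρ ^ #T • fun u => ∏ i ∈ T, e i (u i) := by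
  ext v
  have hsite : ∀ i, ∑ b, m (v i) b * (if i ∈ T then e i b else 1) =
      if i ∈ T then ρ * e i (v i) else 1 := by
    intro i
    split_ifs
    · exact congrFun (he i) (v i)
    · simpa using hm (v i)
  calc (prodKernel m *ᵥ fun u => ∏ i ∈ T, e i (u i)) v
      = ∑ u : ι → A, ∏ i, m (v i) (u i) * (if i ∈ T then e i (u i) else 1) := by
        simp only [mulVec, dotProduct, prodKernel, of_apply, prod_mul_distrib, prod_ite_mem,
          univ_inter]
    _ = ∏ i, ∑ b, m (v i) b * (if i ∈ T then e i b else 1) :=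
        (Fintype.prod_sum fun i b => m (v i) b * if i ∈ T then e i b else 1).symm
    _ = ∏ i, if i ∈ T then ρ * e i (v i) else 1 := by simp only [hsite]
    _ = (ρ ^ #T • fun u => ∏ i ∈ T, e i (u i)) v := by simp [prod_mul_distrib]

theorem ite_eq_sum_prod_sub_mul_pow [DecidableEq A] (c : R) (w u : ι → A) :
    (if u = w then 1 else 0 : R) =
      ∑ T : Finset ι, (∏ i ∈ T, ((if u i = w i then 1 else 0) - c)) *
        c ^ (Fintype.card ι - #T) := by
  calc (if u = w then 1 else 0 : R)
      = ∏ i, (((if u i = w i then 1 else 0) - c) + c) := by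
        simp [funext_iff, Fintype.prod_boole]
    _ = _ := by rw [Fintype.prod_add]; simp [card_compl]

theorem apply_eq_sum_dotProduct_prod_sub_mul_pow [Fintype A] [DecidableEq A] (c : R)
    (x : (ι → A) → R) (w : ι → A) :
    x w = ∑ T : Finset ι,
      (x ⬝ᵥ fun u => ∏ i ∈ T, ((if u i = w i then 1 else 0) - c)) * c ^ (Fintype.card ι - #T) := by
  calc x w = ∑ u, x u * (if u = w then 1 else 0) := by simp
    _ = _ := by
      simp_rw [ite_eq_sum_prod_sub_mul_pow c w, mul_sum]
      rw [sum_comm]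
      simp [dotProduct, sum_mul, mul_assoc]

end Kernels

section Quasispecies

variable {E R : Type*} [Fintype E] [DecidableEq E] [CommRing R]

theorem dotProduct_mul_sharpPeak (x g : E → R) (w : E) (σ : R) :
    (fun v => x v * sharpPeak w σ v) ⬝ᵥ g = x ⬝ᵥ g + (σ - 1) * x w * g w := by
  have hsplit : ∀ v, x v * sharpPeak w σ v * g v =
      x v * g v + if v = w then (σ - 1) * x v * g v else 0 := by
    intro v
    unfold sharpPeak
    split_ifs <;> ring
  simp only [dotProduct, hsplit, sum_add_distrib, sum_ite_eq', mem_univ, if_true]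

theorem sub_mul_dotProduct_eq_of_quasispecies {M : Matrix E E R} {x φ : E → R} {w : E}
    {σ lam μ : R} (hqs : ∀ u, x u * lam = ∑ v, x v * sharpPeak w σ v * M v u)
    (hφ : M *ᵥ φ = μ • φ) :
    (lam - μ) * (x ⬝ᵥ φ) = μ * ((σ - 1) * x w * φ w) := by
  have hvecMul : (fun v => x v * sharpPeak w σ v) ᵥ* M = lam • x := by
    ext u
    rw [Pi.smul_apply, smul_eq_mul, mul_comm, hqs]
    rfl
  have hproj : lam * (x ⬝ᵥ φ) = μ * ((fun v => x v * sharpPeak w σ v) ⬝ᵥ φ) := by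
    calc lam * (x ⬝ᵥ φ) = (lam • x) ⬝ᵥ φ := by rw [smul_dotProduct, smul_eq_mul]
      _ = _ ⬝ᵥ (M *ᵥ φ) := by rw [← hvecMul, dotProduct_mulVec]
      _ = _ := by rw [hφ, dotProduct_smul, smul_eq_mul]
  rw [dotProduct_mul_sharpPeak] at hproj
  linear_combination hproj

end Quasispecies

theorem pos_of_forall_mul_eq_sum {E : Type*} [Fintype E] {x f : E → ℝ} {M : Matrix E E ℝ}
    {lam : ℝ} (hx0 : ∀ u, 0 ≤ x u) (hx : x ≠ 0) (hf : ∀ v, 0 < f v) (hM : ∀ v u, 0 < M v u)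
    (hqs : ∀ u, x u * lam = ∑ v, x v * f v * M v u) (u : E) : 0 < x u := by
  refine (hx0 u).lt_of_ne' fun hu => hx ?_
  have hsum : ∑ v, x v * f v * M v u = 0 := by rw [← hqs, hu, zero_mul]
  have hterms := (sum_eq_zero_iff_of_nonneg fun v _ =>
    mul_nonneg (mul_nonneg (hx0 v) (hf v).le) (hM v u).le).1 hsum
  funext v
  simpa [(hf v).ne', (hM v u).ne'] using hterms v (mem_univ v)

section SharpPeak

variable {ι A : Type*} [Fintype ι] [DecidableEq ι] [Fintype A] [DecidableEq A] [Nonempty A]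
  {α β ρ σ lam : ℝ} {w : ι → A} {x : (ι → A) → ℝ}

theorem dotProduct_prod_centeredIndicator_of_quasispecies (hρ : ρ = β - α)
    (hrow : ((Fintype.card A : ℝ) - 1) * α + β = 1)
    (hqs : ∀ u, x u * lam = ∑ v, x v * sharpPeak w σ v * prodKernel (siteKernel α β) v u)
    (T : Finset ι) (hρ0 : ρ ≠ 0) (hlam : lam ≠ ρ ^ #T) :
    (x ⬝ᵥ fun u => ∏ i ∈ T, centeredIndicator (w i) (u i)) =
      (σ - 1) * x w * ((1 - (Fintype.card A : ℝ)⁻¹) ^ #T * (lam / ρ ^ #T - 1)⁻¹) := by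
  have h := sub_mul_dotProduct_eq_of_quasispecies hqs
    (prodKernel_mulVec_prod (fun a => (sum_siteKernel_apply α β a).trans hrow)
      (fun i => siteKernel_mulVec_centeredIndicator α β (w i)) T)
  have hφw : ∏ i ∈ T, centeredIndicator (w i) (w i) = (1 - (Fintype.card A : ℝ)⁻¹) ^ #T := by
    simp [centeredIndicator]
  rw [← hρ, hφw] at h
  generalize (1 - (Fintype.card A : ℝ)⁻¹) ^ #T = c at h ⊢
  generalize (x ⬝ᵥ _) = y at h ⊢
  have hρT : ρ ^ #T ≠ 0 := pow_ne_zero _ hρ0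
  rw [div_sub_one hρT, inv_div]
  field_simp [sub_ne_zero.2 hlam]
  linear_combination h

theorem one_div_sub_one_eq_of_quasispecies_sharpPeak (hα : 0 < α) (hρ : ρ = β - α)
    (hρ0 : 0 < ρ) (hrow : ((Fintype.card A : ℝ) - 1) * α + β = 1) (hσ : 1 < σ)
    (hx0 : ∀ u, 0 ≤ x u) (hx1 : ∑ u, x u = 1)
    (hqs : ∀ u, x u * lam = ∑ v, x v * sharpPeak w σ v * prodKernel (siteKernel α β) v u)
    (hlam : lam = ∑ v, x v * sharpPeak w σ v) :
    1 / (σ - 1) = ((Fintype.card A : ℝ) ^ Fintype.card ι)⁻¹ *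
      ∑ T : Finset ι, ((Fintype.card A : ℝ) - 1) ^ #T * (lam / ρ ^ #T - 1)⁻¹ := by
  set κ : ℝ := (Fintype.card A : ℝ)
  set n := Fintype.card ι
  have hκ1 : 1 ≤ κ := Nat.one_le_cast.2 Fintype.card_pos
  have hM : ∀ v u : ι → A, 0 < prodKernel (siteKernel α β) v u := fun v u =>
    prod_pos fun i _ => by simp only [siteKernel, of_apply]; split_ifs <;> linarith
  have hxw : 0 < x w := pos_of_forall_mul_eq_sum hx0 (by rintro rfl; simp at hx1)
    (fun v => by unfold sharpPeak; split_ifs <;> linarith) hM hqs w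
  have hlam_eq : lam = 1 + (σ - 1) * x w := by
    simpa [dotProduct, hx1, ← hlam] using dotProduct_mul_sharpPeak x 1 w σ
  have hρ_lt : ∀ k : ℕ, ρ ^ k < lam := fun k => calc
    ρ ^ k ≤ 1 := pow_le_one₀ hρ0.le (by nlinarith)
    _ < lam := hlam_eq ▸ lt_add_of_pos_right 1 (mul_pos (sub_pos.2 hσ) hxw)
  have hweight : ∀ T : Finset ι, (1 - κ⁻¹) ^ #T * κ⁻¹ ^ (n - #T) = (κ ^ n)⁻¹ * (κ - 1) ^ #T := by
    intro T
    rw [show 1 - κ⁻¹ = (κ - 1) * κ⁻¹ by field_simp, mul_pow, mul_assoc, ← pow_add,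
      Nat.add_sub_cancel' (card_le_univ T), inv_pow, mul_comm]
  have hfixed : x w = (σ - 1) * x w *
      ((κ ^ n)⁻¹ * ∑ T : Finset ι, (κ - 1) ^ #T * (lam / ρ ^ #T - 1)⁻¹) := by
    calc x w = ∑ T : Finset ι,
          (x ⬝ᵥ fun u => ∏ i ∈ T, centeredIndicator (w i) (u i)) * κ⁻¹ ^ (n - #T) :=
          apply_eq_sum_dotProduct_prod_sub_mul_pow κ⁻¹ x w
      _ = ∑ T : Finset ι, (σ - 1) * x w * ((κ ^ n)⁻¹ * ((κ - 1) ^ #T * (lam / ρ ^ #T - 1)⁻¹)) :=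
          sum_congr rfl fun T _ => by
            rw [dotProduct_prod_centeredIndicator_of_quasispecies hρ hrow hqs T hρ0.ne'
              (hρ_lt _).ne', ← mul_assoc (κ ^ n)⁻¹, ← hweight]
            ring
      _ = _ := by rw [← mul_sum, ← mul_sum]
  rw [div_eq_iff (sub_pos.2 hσ).ne']
  refine mul_left_cancel₀ hxw.ne' ?_
  linear_combination hfixed

end SharpPeak

theorem mean_fitness_binomial_equation_sharp_peak_general
    (A : Type*) [Fintype A] [DecidableEq A] (κ ℓ : ℕ)
    (hκ : Fintype.card A = κ) (hκ2 : 2 ≤ κ)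
    (q : ℝ) (hq0 : 0 < q) (hq1 : q < ((κ : ℝ) - 1) / κ)
    (ρ : ℝ) (hρ : ρ = 1 - κ * q / ((κ : ℝ) - 1))
    (σ : ℝ) (hσ : 1 < σ) (wstar : Fin ℓ → A)
    (f : (Fin ℓ → A) → ℝ) (hf : ∀ u, f u = if u = wstar then σ else 1)
    (M : Matrix (Fin ℓ → A) (Fin ℓ → A) ℝ)
    (hM : ∀ u v, M u v =
      (q / ((κ : ℝ) - 1)) ^ hammingDist u v * (1 - q) ^ (ℓ - hammingDist u v))
    (x : (Fin ℓ → A) → ℝ) (hx0 : ∀ u, 0 ≤ x u) (hx1 : ∑ u, x u = 1)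
    (hqs : ∀ u, x u * (∑ v, x v * f v) = ∑ v, x v * f v * M v u)
    (lam : ℝ) (hlam : lam = ∑ v, x v * f v) :
    1 / (σ - 1) =
      ((κ : ℝ) ^ ℓ)⁻¹ *
        ∑ k ∈ Finset.range (ℓ + 1),
          (Nat.choose ℓ k : ℝ) * ((κ : ℝ) - 1) ^ k * (lam / ρ ^ k - 1)⁻¹ := by
  subst hκ
  have : Nonempty A := Fintype.card_pos_iff.1 (by omega)
  have hκ_sub : (0 : ℝ) < Fintype.card A - 1 := by
    rw [sub_pos]; exact_mod_cast hκ2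
  have hα : 0 < q / ((Fintype.card A : ℝ) - 1) := div_pos hq0 hκ_sub
  have hρ_eq : ρ = (1 - q) - q / ((Fintype.card A : ℝ) - 1) := by
    rw [hρ]; field_simp; ring
  have hρ0 : 0 < ρ := by
    rw [hρ, sub_pos, div_lt_one hκ_sub]
    rw [lt_div_iff₀ (by linarith)] at hq1
    linarith
  have hrow : ((Fintype.card A : ℝ) - 1) * (q / ((Fintype.card A : ℝ) - 1)) + (1 - q) = 1 := by
    field_simp; ring
  obtain rfl : f = sharpPeak wstar σ := funext hf
  obtain rfl : M = prodKernel (siteKernel (q / ((Fintype.card A : ℝ) - 1)) (1 - q)) := by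
    ext v u
    rw [hM, prodKernel_siteKernel_apply, Fintype.card_fin]
  rw [one_div_sub_one_eq_of_quasispecies_sharpPeak hα hρ_eq hρ0 hrow hσ hx0 hx1
    (hlam ▸ hqs) hlam, ← powerset_univ,
    sum_powerset_apply_card fun k => ((Fintype.card A : ℝ) - 1) ^ k * (lam / ρ ^ k - 1)⁻¹]
  simp [nsmul_eq_mul, mul_assoc]

/-- The Bratus–Novozhilov–Semenov equation for the mean fitness on the sharp peak
landscape: `1/(σ-1) = κ^{-ℓ} ∑_{k=0}^{ℓ} C(ℓ,k)(κ-1)^k / (λ/ρ^k - 1)`. -/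
theorem mean_fitness_binomial_equation_sharp_peak
    (A : Type*) [Fintype A] [DecidableEq A] (κ ℓ : ℕ)
    (hκ : Fintype.card A = κ) (hκ2 : 2 ≤ κ) (hℓ : 1 ≤ ℓ)
    (q : ℝ) (hq0 : 0 < q) (hq1 : q < ((κ : ℝ) - 1) / κ)
    (ρ : ℝ) (hρ : ρ = 1 - κ * q / ((κ : ℝ) - 1))
    (σ : ℝ) (hσ : 1 < σ) (wstar : Fin ℓ → A)
    (f : (Fin ℓ → A) → ℝ) (hf : ∀ u, f u = if u = wstar then σ else 1)
    (M : Matrix (Fin ℓ → A) (Fin ℓ → A) ℝ)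
    (hM : ∀ u v, M u v =
      (q / ((κ : ℝ) - 1)) ^ hammingDist u v * (1 - q) ^ (ℓ - hammingDist u v))
    (x : (Fin ℓ → A) → ℝ) (hx0 : ∀ u, 0 ≤ x u) (hx1 : ∑ u, x u = 1)
    (hqs : ∀ u, x u * (∑ v, x v * f v) = ∑ v, x v * f v * M v u)
    (lam : ℝ) (hlam : lam = ∑ v, x v * f v) :
    1 / (σ - 1) =
      ((κ : ℝ) ^ ℓ)⁻¹ *
        ∑ k ∈ Finset.range (ℓ + 1),
          (Nat.choose ℓ k : ℝ) * ((κ : ℝ) - 1) ^ k * (lam / ρ ^ k - 1)⁻¹ :=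
  mean_fitness_binomial_equation_sharp_peak_general A κ ℓ hκ hκ2 q hq0 hq1 ρ hρ σ hσ wstar f hf M hM
    x hx0 hx1 hqs lam hlam
end

section
/- Let x be a quasispecies solution for the sharp peak fitness function on E = 𝒜^ℓ with mean fitness λ, and for 0 ≤ k ≤ ℓ let 𝒬(k) = Σ_{u : d(u,w*) = k} x(u) be the total proportion of genotypes at Hamming distance k from the wild type. Then 𝒬(k) = Σ_{n≥1} ((λ−1)/λⁿ) · C(ℓ,k) · ((1−ρⁿ)·(κ−1)/κ)^k · (ρⁿ + (1−ρⁿ)/κ)^{ℓ−k}. -/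
/-!
The mutation matrix is the `ℓ`-fold tensor power of the symmetric kernel
`ρ • 1 + ((1 - ρ) / κ) • J` on the alphabet (`J` the all-ones matrix), and these kernels
multiply like their parameters, so `Mⁿ` is the tensor power of the kernel with parameter `ρⁿ`.
For the sharp peak the quasispecies equation reads `x = λ⁻¹ • x M + (1 - λ⁻¹) • M(w*, ·)`
with `λ = 1 + (σ - 1) x(w*) > 1`. Iterating it gives `x = ∑ₙ (λ - 1) / λⁿ⁺¹ • Mⁿ⁺¹(w*, ·)`;
the remainder `λ⁻ᴺ • x Mᴺ` vanishes because `M` is stochastic. On the Hamming sphere of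
radius `k` around `w*` the row `Mⁿ(w*, ·)` is constant, and the sphere has `C(ℓ, k) (κ - 1)ᵏ`
points.
-/

open Finset Matrix Filter Topology

lemma card_filter_hammingDist_eq {ι A : Type*} [Fintype ι] [DecidableEq ι] [Fintype A]
    [DecidableEq A] (w : ι → A) (k : ℕ) :
    #{u | hammingDist u w = k} = (Fintype.card ι).choose k * (Fintype.card A - 1) ^ k := by
  set support : (ι → A) → Finset ι := fun u => {i | u i ≠ w i}
  have hmaps : Set.MapsTo support ↑({u | hammingDist u w = k} : Finset (ι → A))
      ↑(powersetCard k (univ : Finset ι)) := by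
    intro u hu
    simpa [support, mem_powersetCard, hammingDist] using hu
  rw [card_eq_sum_card_fiberwise hmaps, ← card_univ, ← card_powersetCard, card_eq_sum_ones,
    sum_mul, one_mul]
  refine sum_congr rfl fun s hs => ?_
  rw [mem_powersetCard] at hs
  have hfiber : ({u ∈ {u | hammingDist u w = k} | support u = s} : Finset (ι → A)) =
      Fintype.piFinset fun i => if i ∈ s then univ.erase (w i) else {w i} := by
    ext u
    simp only [mem_filter, mem_univ, true_and, Fintype.mem_piFinset]
    change #(support u) = k ∧ _ ↔ _
    constructor
    · rintro ⟨-, rfl⟩ i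
      split_ifs with h <;> simp_all [support]
    · intro hu
      have : support u = s := by
        ext i
        specialize hu i
        split_ifs at hu <;> simp_all [support]
      exact ⟨this ▸ hs.2, this⟩
  rw [hfiber, Fintype.card_piFinset]
  simp_rw [apply_ite card, card_erase_of_mem (mem_univ _), card_univ, card_singleton]
  rw [prod_ite_mem univ s, univ_inter, prod_const, hs.2]

namespace Matrix

section TensorPower

variable {A R : Type*} [CommSemiring R] (ι : Type*) [Fintype ι]

def tensorPower (P : Matrix A A R) : Matrix (ι → A) (ι → A) R :=
  of fun v u => ∏ i, P (v i) (u i)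

variable {ι}

@[simp]
lemma tensorPower_apply (P : Matrix A A R) (v u : ι → A) :
    tensorPower ι P v u = ∏ i, P (v i) (u i) := rfl

lemma tensorPower_mul [Fintype A] [DecidableEq ι] (P Q : Matrix A A R) :
    tensorPower ι P * tensorPower ι Q = tensorPower ι (P * Q) := by
  ext v u
  simp only [mul_apply, tensorPower_apply, ← prod_mul_distrib, Fintype.prod_sum]

lemma tensorPower_one [DecidableEq A] [DecidableEq ι] :
    tensorPower ι (1 : Matrix A A R) = 1 := by
  ext v u
  simp only [tensorPower_apply, one_apply, prod_boole, funext_iff, mem_univ, true_imp_iff]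

lemma tensorPower_pow [Fintype A] [DecidableEq A] [DecidableEq ι] (P : Matrix A A R) (n : ℕ) :
    tensorPower ι P ^ n = tensorPower ι (P ^ n) := by
  induction n with
  | zero => rw [pow_zero, pow_zero, tensorPower_one]
  | succ n ih => rw [pow_succ, ih, tensorPower_mul, pow_succ]

lemma tensorPower_mem_rowStochastic [Fintype A] [DecidableEq A] [DecidableEq ι] [PartialOrder R]
    [IsOrderedRing R] {P : Matrix A A R} (hP : P ∈ rowStochastic R A) :
    tensorPower ι P ∈ rowStochastic R (ι → A) := by
  rw [mem_rowStochastic_iff_sum]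
  refine ⟨fun v u => prod_nonneg fun i _ => nonneg_of_mem_rowStochastic hP, fun v => ?_⟩
  simp only [tensorPower_apply, ← Fintype.prod_sum, sum_row_of_mem_rowStochastic hP,
    prod_const_one]

lemma tensorPower_apply_of_eq_ite [DecidableEq A] {P : Matrix A A R} {r c : R}
    (hP : ∀ a b, P a b = if a = b then r else c) (v u : ι → A) :
    tensorPower ι P v u = c ^ hammingDist v u * r ^ (Fintype.card ι - hammingDist v u) := by
  have hcard := card_filter_add_card_filter_not (s := univ) fun i => v i = u i
  rw [card_univ] at hcard
  rw [tensorPower_apply, ← hcard, hammingDist]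
  simp only [hP, prod_ite, prod_const, Nat.add_sub_cancel, mul_comm]

end TensorPower

section SymmetricKernel

variable (A : Type*) {R : Type*} [Fintype A] [DecidableEq A] [Field R]

def symmetricKernel (t : R) : Matrix A A R :=
  of fun a b => if a = b then t + (1 - t) / Fintype.card A else (1 - t) / Fintype.card A

variable {A}

lemma symmetricKernel_apply (t : R) (a b : A) :
    symmetricKernel A t a b = (1 - t) / Fintype.card A + if a = b then t else 0 := by
  simp only [symmetricKernel, of_apply]
  split_ifs <;> ring

lemma symmetricKernel_mul [CharZero R] (s t : R) :
    symmetricKernel A s * symmetricKernel A t = symmetricKernel A (s * t) := by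
  ext a b
  have : Nonempty A := ⟨a⟩
  have hA : (Fintype.card A : R) ≠ 0 := Nat.cast_ne_zero.mpr Fintype.card_ne_zero
  simp only [mul_apply, symmetricKernel_apply, add_mul, mul_add, sum_add_distrib, mul_ite, ite_mul,
    mul_zero, zero_mul, sum_ite_eq, sum_ite_eq', mem_univ, if_true, sum_const, card_univ,
    nsmul_eq_mul]
  split_ifs <;> field_simp <;> ring

lemma symmetricKernel_one : symmetricKernel A (1 : R) = 1 := by
  ext a b
  simp [symmetricKernel_apply, one_apply]

lemma symmetricKernel_pow [CharZero R] (t : R) (n : ℕ) :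
    symmetricKernel A t ^ n = symmetricKernel A (t ^ n) := by
  induction n with
  | zero => rw [pow_zero, pow_zero, symmetricKernel_one]
  | succ n ih => rw [pow_succ, ih, symmetricKernel_mul, pow_succ]

lemma symmetricKernel_mem_rowStochastic [LinearOrder R] [IsStrictOrderedRing R] {t : R}
    (ht0 : 0 ≤ t) (ht1 : t ≤ 1) : symmetricKernel A t ∈ rowStochastic R A := by
  rw [mem_rowStochastic_iff_sum]
  refine ⟨fun a b => ?_, fun a => ?_⟩
  · rw [symmetricKernel_apply]
    split_ifs <;> positivity
  · have : Nonempty A := ⟨a⟩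
    have hA : (Fintype.card A : R) ≠ 0 := Nat.cast_ne_zero.mpr Fintype.card_ne_zero
    simp only [symmetricKernel_apply, sum_add_distrib, sum_ite_eq, mem_univ, if_true, sum_const,
      card_univ, nsmul_eq_mul]
    field_simp
    ring

lemma tensorPower_symmetricKernel_apply {ι : Type*} [Fintype ι] (t : R) (v u : ι → A) :
    tensorPower ι (symmetricKernel A t) v u = ((1 - t) / Fintype.card A) ^ hammingDist v u *
      (t + (1 - t) / Fintype.card A) ^ (Fintype.card ι - hammingDist v u) :=
  tensorPower_apply_of_eq_ite (fun _ _ => rfl) v u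

lemma sum_filter_hammingDist_tensorPower_symmetricKernel {ι : Type*} [Fintype ι] [DecidableEq ι]
    [Nonempty A] (t : R) (w : ι → A) (k : ℕ) :
    ∑ u with hammingDist u w = k, tensorPower ι (symmetricKernel A t) w u =
      (Fintype.card ι).choose k * ((1 - t) * ((Fintype.card A : R) - 1) / Fintype.card A) ^ k *
        (t + (1 - t) / Fintype.card A) ^ (Fintype.card ι - k) := by
  have hsphere : ∀ u ∈ ({u | hammingDist u w = k} : Finset (ι → A)),
      tensorPower ι (symmetricKernel A t) w u =
        ((1 - t) / Fintype.card A) ^ k * (t + (1 - t) / Fintype.card A) ^ (Fintype.card ι - k) := by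
    intro u hu
    rw [mem_filter] at hu
    rw [tensorPower_symmetricKernel_apply, hammingDist_comm, hu.2]
  rw [sum_congr rfl hsphere, sum_const, card_filter_hammingDist_eq, nsmul_eq_mul,
    Nat.cast_mul, Nat.cast_pow, Nat.cast_sub Fintype.card_pos, Nat.cast_one,
    show (1 - t) * ((Fintype.card A : R) - 1) / Fintype.card A =
      ((Fintype.card A : R) - 1) * ((1 - t) / Fintype.card A) by ring, mul_pow]
  ring

end SymmetricKernel

lemma vecMul_apply_pos {n : Type*} [Fintype n] {M : Matrix n n ℝ} (hM : ∀ i j, 0 < M i j)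
    {x : n → ℝ} (hx0 : ∀ i, 0 ≤ x i) (hx : x ≠ 0) (j : n) : 0 < (x ᵥ* M) j := by
  obtain ⟨i, hi⟩ := Function.ne_iff.mp hx
  exact sum_pos' (fun i _ => mul_nonneg (hx0 i) (hM i j).le)
    ⟨i, mem_univ i, mul_pos ((hx0 i).lt_of_ne' hi) (hM i j)⟩

section Neumann

variable {n R : Type*} [Fintype n] [DecidableEq n]

lemma eq_sum_vecMul_pow_add_vecMul_pow [Semiring R] {P : Matrix n n R} {x b : n → R}
    (hx : x = x ᵥ* P + b) (N : ℕ) : x = ∑ m ∈ range N, b ᵥ* P ^ m + x ᵥ* P ^ N := by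
  induction N with
  | zero => rw [range_zero, sum_empty, pow_zero, vecMul_one, zero_add]
  | succ N ih =>
    conv_lhs => rw [ih, hx, add_vecMul, vecMul_vecMul, ← pow_succ']
    rw [sum_range_succ]
    abel

lemma vecMul_apply_le_sum_of_mem_rowStochastic {M : Matrix n n ℝ} (hM : M ∈ rowStochastic ℝ n)
    {x : n → ℝ} (hx : ∀ i, 0 ≤ x i) (j : n) : (x ᵥ* M) j ≤ ∑ i, x i :=
  sum_le_sum fun i _ => mul_le_of_le_one_right (hx i) (le_one_of_mem_rowStochastic hM)

lemma hasSum_smul_vecMul_pow_of_eq_smul_vecMul_add {M : Matrix n n ℝ}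
    (hM : M ∈ rowStochastic ℝ n) {c : ℝ} (hc0 : 0 ≤ c) (hc1 : c < 1) {x b : n → ℝ}
    (hx0 : ∀ i, 0 ≤ x i) (hb0 : ∀ i, 0 ≤ b i) (hx : x = c • (x ᵥ* M) + b) :
    HasSum (fun m => c ^ m • (b ᵥ* M ^ m)) x := by
  have hexpand (N : ℕ) : x = ∑ m ∈ range N, c ^ m • (b ᵥ* M ^ m) + c ^ N • (x ᵥ* M ^ N) := by
    simpa only [smul_pow, vecMul_smul] using
      eq_sum_vecMul_pow_add_vecMul_pow (P := c • M) (by rwa [vecMul_smul]) N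
  rw [Pi.hasSum]
  intro j
  have hterm (m : ℕ) : 0 ≤ (c ^ m • (b ᵥ* M ^ m)) j :=
    mul_nonneg (pow_nonneg hc0 m) (nonneg_vecMul_of_mem_rowStochastic (pow_mem hM m) hb0 j)
  have hrem : Tendsto (fun N => c ^ N * (x ᵥ* M ^ N) j) atTop (𝓝 0) := by
    refine squeeze_zero (fun N => ?_) (fun N => ?_)
      (by simpa using (tendsto_pow_atTop_nhds_zero_of_lt_one hc0 hc1).mul_const (∑ i, x i))
    · exact mul_nonneg (pow_nonneg hc0 N)
        (nonneg_vecMul_of_mem_rowStochastic (pow_mem hM N) hx0 j)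
    · exact mul_le_mul_of_nonneg_left
        (vecMul_apply_le_sum_of_mem_rowStochastic (pow_mem hM N) hx0 j) (pow_nonneg hc0 N)
  have hpartial (N : ℕ) :
      ∑ m ∈ range N, (c ^ m • (b ᵥ* M ^ m)) j = x j - c ^ N * (x ᵥ* M ^ N) j := by
    have h := congrFun (hexpand N) j
    simp only [Pi.add_apply, Pi.smul_apply, smul_eq_mul, Finset.sum_apply] at h ⊢
    linarith
  rw [hasSum_iff_tendsto_nat_of_nonneg hterm]
  simpa only [hpartial, sub_zero] using hrem.const_sub (x j)

end Neumann

end Matrix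

section SharpPeak

variable {E : Type*} [Fintype E] [DecidableEq E] {f x : E → ℝ} {σ : ℝ} {w : E}

def meanFitness (f x : E → ℝ) : ℝ := ∑ v, x v * f v

lemma sum_mul_sharpPeak_mul (hf : ∀ u, f u = if u = w then σ else 1) (x g : E → ℝ) :
    ∑ v, x v * f v * g v = ∑ v, x v * g v + (σ - 1) * x w * g w := by
  have hsplit (v : E) :
      x v * f v * g v = x v * g v + if v = w then (σ - 1) * x v * g v else 0 := by
    rw [hf]; split_ifs <;> ring
  simp only [hsplit, sum_add_distrib, sum_ite_eq', mem_univ, if_true]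

lemma meanFitness_sharpPeak (hf : ∀ u, f u = if u = w then σ else 1) (hx1 : ∑ u, x u = 1) :
    meanFitness f x = 1 + (σ - 1) * x w := by
  rw [meanFitness]
  simpa only [mul_one, hx1] using sum_mul_sharpPeak_mul hf x fun _ => 1

variable {M : Matrix E E ℝ}

lemma quasispecies_sharpPeak_apply (hf : ∀ u, f u = if u = w then σ else 1)
    (hx1 : ∑ u, x u = 1) (hqs : ∀ u, x u * meanFitness f x = ∑ v, x v * f v * M v u) (u : E) :
    x u * meanFitness f x = (x ᵥ* M) u + (meanFitness f x - 1) * M w u := by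
  rw [hqs, sum_mul_sharpPeak_mul hf x (M · u), meanFitness_sharpPeak hf hx1]
  simp only [vecMul, dotProduct]
  ring

lemma one_lt_meanFitness_sharpPeak (hMpos : ∀ v u, 0 < M v u) (hσ : 1 < σ)
    (hf : ∀ u, f u = if u = w then σ else 1) (hx0 : ∀ u, 0 ≤ x u) (hx1 : ∑ u, x u = 1)
    (hqs : ∀ u, x u * meanFitness f x = ∑ v, x v * f v * M v u) : 1 < meanFitness f x := by
  have hx : x ≠ 0 := by
    rintro rfl
    simp at hx1
  have hxw : 0 < x w := by
    refine (hx0 w).lt_of_ne' fun hxw => ?_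
    have h := quasispecies_sharpPeak_apply hf hx1 hqs w
    rw [hxw, meanFitness_sharpPeak hf hx1, hxw] at h
    linarith [vecMul_apply_pos hMpos hx0 hx w]
  rw [meanFitness_sharpPeak hf hx1]
  nlinarith

theorem hasSum_quasispecies_sharpPeak (hM : M ∈ rowStochastic ℝ E) (hMpos : ∀ v u, 0 < M v u)
    (hσ : 1 < σ) (hf : ∀ u, f u = if u = w then σ else 1) (hx0 : ∀ u, 0 ≤ x u)
    (hx1 : ∑ u, x u = 1) (hqs : ∀ u, x u * meanFitness f x = ∑ v, x v * f v * M v u) :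
    HasSum (fun n => ((meanFitness f x - 1) / meanFitness f x ^ (n + 1)) • (M ^ (n + 1)) w) x := by
  set lam := meanFitness f x
  have hlam : 1 < lam := one_lt_meanFitness_sharpPeak hMpos hσ hf hx0 hx1 hqs
  have hlam0 : lam ≠ 0 := by positivity
  have hfixed : x = lam⁻¹ • (x ᵥ* M) + (1 - lam⁻¹) • M w := by
    ext u
    have h := quasispecies_sharpPeak_apply hf hx1 hqs u
    simp only [Pi.add_apply, Pi.smul_apply, smul_eq_mul]
    field_simp
    linarith
  have hseries := hasSum_smul_vecMul_pow_of_eq_smul_vecMul_add (b := (1 - lam⁻¹) • M w) hM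
    (inv_nonneg.mpr (by positivity)) (inv_lt_one_of_one_lt₀ hlam) hx0
    (fun u => mul_nonneg (sub_nonneg.mpr (inv_le_one_of_one_le₀ hlam.le)) (hMpos w u).le) hfixed
  convert hseries using 2 with n
  rw [smul_vecMul, ← mul_apply_eq_vecMul, ← pow_succ', smul_smul, inv_pow, pow_succ]
  congr 1
  field_simp

end SharpPeak

theorem quasispecies_hamming_class_series_general
    (A : Type*) [Fintype A] [DecidableEq A] (κ ℓ : ℕ)
    (hκ : Fintype.card A = κ) (hκ2 : 2 ≤ κ)
    (q : ℝ) (hq0 : 0 < q) (hq1 : q < ((κ : ℝ) - 1) / κ)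
    (ρ : ℝ) (hρ : ρ = 1 - κ * q / ((κ : ℝ) - 1))
    (σ : ℝ) (hσ : 1 < σ) (wstar : Fin ℓ → A)
    (f : (Fin ℓ → A) → ℝ) (hf : ∀ u, f u = if u = wstar then σ else 1)
    (M : Matrix (Fin ℓ → A) (Fin ℓ → A) ℝ)
    (hM : ∀ u v, M u v =
      (q / ((κ : ℝ) - 1)) ^ hammingDist u v * (1 - q) ^ (ℓ - hammingDist u v))
    (x : (Fin ℓ → A) → ℝ) (hx0 : ∀ u, 0 ≤ x u) (hx1 : ∑ u, x u = 1)
    (hqs : ∀ u, x u * (∑ v, x v * f v) = ∑ v, x v * f v * M v u)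
    (lam : ℝ) (hlam : lam = ∑ v, x v * f v)
    (k : ℕ) :
    (∑ u ∈ Finset.univ.filter (fun u => hammingDist u wstar = k), x u) =
      ∑' n : ℕ,
        ((lam - 1) / lam ^ (n + 1)) * (Nat.choose ℓ k : ℝ) *
          ((1 - ρ ^ (n + 1)) * ((κ : ℝ) - 1) / κ) ^ k *
          (ρ ^ (n + 1) + (1 - ρ ^ (n + 1)) / κ) ^ (ℓ - k) := by
  subst hκ
  have : Nonempty A := Fintype.card_pos_iff.mp (by omega)
  have hκ0 : (Fintype.card A : ℝ) ≠ 0 := by positivity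
  have hκ1 : (0 : ℝ) < Fintype.card A - 1 := by
    linarith [show (2 : ℝ) ≤ Fintype.card A by exact_mod_cast hκ2]
  have hq1' : q < 1 := hq1.trans ((div_lt_one (by positivity)).mpr (by linarith))
  obtain ⟨hρ0, hρ1⟩ : 0 < ρ ∧ ρ < 1 := by
    rw [hρ, sub_pos, sub_lt_self_iff, div_lt_one hκ1]
    exact ⟨by rwa [lt_div_iff₀ (by positivity), mul_comm] at hq1, by positivity⟩
  have hMK : M = tensorPower (Fin ℓ) (symmetricKernel A ρ) := by
    ext v u
    rw [hM, tensorPower_symmetricKernel_apply, Fintype.card_fin, hρ]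
    congr 2 <;> field_simp <;> ring
  have hMpos (v u) : 0 < M v u := by
    rw [hM]
    exact mul_pos (pow_pos (div_pos hq0 hκ1) _) (pow_pos (sub_pos.mpr hq1') _)
  have hseries := hasSum_quasispecies_sharpPeak
    (hMK ▸ tensorPower_mem_rowStochastic (symmetricKernel_mem_rowStochastic hρ0.le hρ1.le))
    hMpos hσ hf hx0 hx1 hqs
  rw [meanFitness, ← hlam] at hseries
  rw [← (hasSum_sum fun u _ => Pi.hasSum.mp hseries u).tsum_eq]
  congr 1 with n
  simp only [hMK, tensorPower_pow, symmetricKernel_pow, Pi.smul_apply, smul_eq_mul, ← mul_sum,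
    sum_filter_hammingDist_tensorPower_symmetricKernel, Fintype.card_fin]
  ring

/-- Exact series formula for the quasispecies distribution on Hamming classes:
`𝒬(k) = ∑_{n≥1} ((λ-1)/λⁿ) C(ℓ,k) ((1-ρⁿ)(κ-1)/κ)^k (ρⁿ + (1-ρⁿ)/κ)^{ℓ-k}`. -/
theorem quasispecies_hamming_class_series
    (A : Type*) [Fintype A] [DecidableEq A] (κ ℓ : ℕ)
    (hκ : Fintype.card A = κ) (hκ2 : 2 ≤ κ) (hℓ : 1 ≤ ℓ)
    (q : ℝ) (hq0 : 0 < q) (hq1 : q < ((κ : ℝ) - 1) / κ)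
    (ρ : ℝ) (hρ : ρ = 1 - κ * q / ((κ : ℝ) - 1))
    (σ : ℝ) (hσ : 1 < σ) (wstar : Fin ℓ → A)
    (f : (Fin ℓ → A) → ℝ) (hf : ∀ u, f u = if u = wstar then σ else 1)
    (M : Matrix (Fin ℓ → A) (Fin ℓ → A) ℝ)
    (hM : ∀ u v, M u v =
      (q / ((κ : ℝ) - 1)) ^ hammingDist u v * (1 - q) ^ (ℓ - hammingDist u v))
    (x : (Fin ℓ → A) → ℝ) (hx0 : ∀ u, 0 ≤ x u) (hx1 : ∑ u, x u = 1)
    (hqs : ∀ u, x u * (∑ v, x v * f v) = ∑ v, x v * f v * M v u)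
    (lam : ℝ) (hlam : lam = ∑ v, x v * f v)
    (k : ℕ) (hk : k ≤ ℓ) :
    (∑ u ∈ Finset.univ.filter (fun u => hammingDist u wstar = k), x u) =
      ∑' n : ℕ,
        ((lam - 1) / lam ^ (n + 1)) * (Nat.choose ℓ k : ℝ) *
          ((1 - ρ ^ (n + 1)) * ((κ : ℝ) - 1) / κ) ^ k *
          (ρ ^ (n + 1) + (1 - ρ ^ (n + 1)) / κ) ^ (ℓ - k) :=
  quasispecies_hamming_class_series_general A κ ℓ hκ hκ2 q hq0 hq1 ρ hρ σ hσ wstar f hf M hM x hx0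
    hx1 hqs lam hlam k
end

section
/- Let x be a quasispecies solution for the sharp peak fitness function on E = 𝒜^ℓ with mean fitness λ. Then the mean Hamming distance to the wild type in the quasispecies distribution satisfies the exact formula Σ_{u ∈ E} d(u,w*)·x(u) = ℓ q λ / (λ − ρ). -/
open scoped BigOperators

/-- Exact formula for the mean Hamming distance to the wild type in the
quasispecies distribution: `∑_u d(u,w*) x(u) = ℓ q λ / (λ - ρ)`. -/
theorem quasispecies_mean_hamming_distance
    (A : Type*) [Fintype A] [DecidableEq A] (κ ℓ : ℕ)
    (hκ : Fintype.card A = κ) (hκ2 : 2 ≤ κ) (hℓ : 1 ≤ ℓ)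
    (q : ℝ) (hq0 : 0 < q) (hq1 : q < ((κ : ℝ) - 1) / κ)
    (ρ : ℝ) (hρ : ρ = 1 - κ * q / ((κ : ℝ) - 1))
    (σ : ℝ) (hσ : 1 < σ) (wstar : Fin ℓ → A)
    (f : (Fin ℓ → A) → ℝ) (hf : ∀ u, f u = if u = wstar then σ else 1)
    (M : Matrix (Fin ℓ → A) (Fin ℓ → A) ℝ)
    (hM : ∀ u v, M u v =
      (q / ((κ : ℝ) - 1)) ^ hammingDist u v * (1 - q) ^ (ℓ - hammingDist u v))
    (x : (Fin ℓ → A) → ℝ) (hx0 : ∀ u, 0 ≤ x u) (hx1 : ∑ u, x u = 1)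
    (hqs : ∀ u, x u * (∑ v, x v * f v) = ∑ v, x v * f v * M v u)
    (lam : ℝ) (hlam : lam = ∑ v, x v * f v) :
    (∑ u, (hammingDist u wstar : ℝ) * x u) = ℓ * q * lam / (lam - ρ) := by
  have hκR : (2:ℝ) ≤ (κ:ℝ) := by exact_mod_cast hκ2
  have hκ1 : (0:ℝ) < (κ:ℝ) - 1 := by linarith
  have hκ0 : ((κ:ℝ) - 1) ≠ 0 := ne_of_gt hκ1
  set c : ℝ := q / ((κ:ℝ) - 1) with hc
  -- product formula for M
  have hprod : ∀ v u : Fin ℓ → A,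
      M v u = ∏ i, (if u i = v i then (1-q) else c) := by
    intro v u
    rw [hM, Finset.prod_ite, Finset.prod_const, Finset.prod_const]
    have h1 : (Finset.univ.filter fun i => ¬ u i = v i).card = hammingDist v u := by
      show _ = (Finset.univ.filter fun i => v i ≠ u i).card
      congr 1; ext i; simp [ne_comm, eq_comm]
    have h2 : (Finset.univ.filter fun i => u i = v i).card = ℓ - hammingDist v u := by
      have := Finset.card_filter_add_card_filter_not
        (s := (Finset.univ : Finset (Fin ℓ))) (p := fun i => u i = v i)
      simp only [Finset.card_univ, Fintype.card_fin] at this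
      omega
    rw [h1, h2]; ring
  -- sum of g over the alphabet is 1
  have hgsum : ∀ a : A, ∑ b : A, (if b = a then (1-q) else c) = 1 := by
    intro a
    have hb : ∀ b : A, (if b = a then (1-q) else c) = c + (if b = a then (1-q) - c else 0) := by
      intro b; by_cases hb : b = a <;> simp [hb]
    rw [Finset.sum_congr rfl (fun b _ => hb b)]
    rw [Finset.sum_add_distrib, Finset.sum_const, Finset.sum_ite_eq' Finset.univ a]
    simp only [Finset.card_univ, hκ, Finset.mem_univ, if_true, nsmul_eq_mul]
    rw [hc]; field_simp; ring
  have hd : ∀ u : Fin ℓ → A, ((hammingDist u wstar : ℕ) : ℝ) =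
      ∑ i, (if u i = wstar i then (0:ℝ) else 1) := by
    intro u
    have h0 : ((hammingDist u wstar : ℕ) : ℝ)
        = ((Finset.univ.filter fun i => u i ≠ wstar i).card : ℝ) := rfl
    rw [h0, ← Finset.sum_boole]
    congr 1; ext i; by_cases h : u i = wstar i <;> simp [h]
  -- key moment identity
  have hkey : ∀ v : Fin ℓ → A,
      (∑ u, (hammingDist u wstar : ℝ) * M v u) = ℓ * q + ρ * hammingDist v wstar := by
    intro v
    have hterm : ∀ i : Fin ℓ,
        (∑ u : Fin ℓ → A, (if u i = wstar i then (0:ℝ) else 1)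
          * ∏ j, (if u j = v j then (1-q) else c))
        = (if v i = wstar i then q else q + ρ) := by
      intro i
      set H : Fin ℓ → A → ℝ := fun j b =>
        if j = i then (if b = wstar i then (0:ℝ) else 1) * (if b = v i then (1-q) else c)
        else (if b = v j then (1-q) else c) with hH
      have e1 : ∀ u : Fin ℓ → A, (if u i = wstar i then (0:ℝ) else 1)
          * ∏ j, (if u j = v j then (1-q) else c) = ∏ j, H j (u j) := by
        intro u
        rw [← Finset.mul_prod_erase Finset.univ (fun j => H j (u j)) (Finset.mem_univ i)]
        have hHi : H i (u i)
            = (if u i = wstar i then (0:ℝ) else 1) * (if u i = v i then (1-q) else c) := by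
          simp [hH]
        rw [hHi, mul_assoc]
        congr 1
        rw [← Finset.mul_prod_erase Finset.univ
          (fun j => (if u j = v j then (1-q) else c)) (Finset.mem_univ i)]
        congr 1
        refine Finset.prod_congr rfl fun j hj => ?_
        simp [hH, Finset.ne_of_mem_erase hj]
      rw [Finset.sum_congr rfl (fun u _ => e1 u), ← Fintype.prod_sum H]
      rw [← Finset.mul_prod_erase Finset.univ (fun j => ∑ b, H j b) (Finset.mem_univ i)]
      have e2 : (∏ j ∈ Finset.univ.erase i, ∑ b, H j b) = 1 := by
        refine Finset.prod_eq_one fun j hj => ?_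
        have hb : ∀ b, H j b = (if b = v j then (1-q) else c) := fun b => by
          simp [hH, Finset.ne_of_mem_erase hj]
        rw [Finset.sum_congr rfl (fun b _ => hb b)]
        exact hgsum (v j)
      rw [e2, mul_one]
      have e3 : ∀ b, H i b = (if b = v i then (1-q) else c)
          - (if b = wstar i then (if b = v i then (1-q) else c) else 0) := by
        intro b; by_cases hb : b = wstar i <;> simp [hH, hb]
      rw [Finset.sum_congr rfl (fun b _ => e3 b), Finset.sum_sub_distrib, hgsum,
        Finset.sum_ite_eq' Finset.univ (wstar i)]
      simp only [Finset.mem_univ, if_true]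
      by_cases hvw : v i = wstar i
      · rw [if_pos hvw, if_pos hvw.symm]; ring
      · rw [if_neg hvw, if_neg (fun h => hvw h.symm), hρ, hc]
        field_simp; ring
    have hswap : (∑ u, (hammingDist u wstar : ℝ) * M v u)
        = ∑ i, ∑ u : Fin ℓ → A, (if u i = wstar i then (0:ℝ) else 1)
            * ∏ j, (if u j = v j then (1-q) else c) := by
      rw [Finset.sum_comm]
      refine Finset.sum_congr rfl fun u _ => ?_
      rw [hd u, hprod, Finset.sum_mul]
    rw [hswap, Finset.sum_congr rfl (fun i _ => hterm i)]
    have hsplit : ∀ i, (if v i = wstar i then q else q + ρ)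
        = q + ρ * (if v i = wstar i then (0:ℝ) else 1) := by
      intro i; by_cases h : v i = wstar i <;> simp [h]
    rw [Finset.sum_congr rfl (fun i _ => hsplit i), Finset.sum_add_distrib,
      Finset.sum_const, ← Finset.mul_sum, ← hd v]
    simp [mul_comm]
  -- put things together
  set D : ℝ := ∑ u, (hammingDist u wstar : ℝ) * x u with hD
  have hmain : D * lam = ℓ * q * lam + ρ * D := by
    have h1 : D * lam = ∑ u, (hammingDist u wstar : ℝ) * (∑ v, x v * f v * M v u) := by
      rw [hD, Finset.sum_mul]
      refine Finset.sum_congr rfl fun u _ => ?_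
      have h := hqs u
      rw [← hlam] at h
      rw [mul_assoc, h]
    have h2 : ∑ u, (hammingDist u wstar : ℝ) * (∑ v, x v * f v * M v u)
        = ∑ v, x v * f v * (ℓ * q + ρ * hammingDist v wstar) := by
      have e1 : ∀ u : Fin ℓ → A, (hammingDist u wstar : ℝ) * (∑ v, x v * f v * M v u)
          = ∑ v, x v * f v * ((hammingDist u wstar : ℝ) * M v u) := by
        intro u
        rw [Finset.mul_sum]
        exact Finset.sum_congr rfl fun v _ => by ring
      rw [Finset.sum_congr rfl (fun u _ => e1 u), Finset.sum_comm]
      refine Finset.sum_congr rfl fun v _ => ?_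
      rw [← Finset.mul_sum, hkey v]
    have h3 : ∑ v, x v * f v * (ℓ * q + ρ * hammingDist v wstar)
        = ℓ * q * lam + ρ * D := by
      have e2 : ∀ v, x v * f v * (ℓ * q + ρ * hammingDist v wstar)
          = ℓ * q * (x v * f v) + ρ * ((hammingDist v wstar : ℝ) * x v) := by
        intro v
        rcases eq_or_ne v wstar with hv | hv
        · have h0 : hammingDist v wstar = 0 := by rw [hv]; exact hammingDist_self _
          rw [h0]; push_cast; ring
        · rw [hf v, if_neg hv]; ring
      rw [Finset.sum_congr rfl (fun v _ => e2 v), Finset.sum_add_distrib,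
        ← Finset.mul_sum, ← Finset.mul_sum, ← hlam, ← hD]
    rw [h1, h2, h3]
  have hlam1 : 1 ≤ lam := by
    rw [hlam, ← hx1]
    refine Finset.sum_le_sum fun v _ => ?_
    have : 1 ≤ f v := by rw [hf v]; split <;> linarith
    nlinarith [hx0 v]
  have hρlt : ρ < 1 := by
    rw [hρ]
    have : 0 < (κ:ℝ) * q / ((κ:ℝ) - 1) := by positivity
    linarith
  have hne : lam - ρ ≠ 0 := by intro h; linarith
  rw [eq_div_iff hne]
  show D * (lam - ρ) = ℓ * q * lam
  linarith [hmain]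
end

section
/- The mean fitness λ of any quasispecies solution for the sharp peak fitness function on E = 𝒜^ℓ satisfies the lower bound λ ≥ σ·(1 − κq/(κ−1))^{(κ−1)ℓ/κ} (with a real exponent (κ−1)ℓ/κ). -/
open scoped BigOperators

/-- Lower bound on the mean fitness of a sharp peak quasispecies:
`λ ≥ σ (1 - κq/(κ-1))^{(κ-1)ℓ/κ}` (real exponent). -/
theorem mean_fitness_lower_bound_sharp_peak
    (A : Type*) [Fintype A] [DecidableEq A] (κ ℓ : ℕ)
    (hκ : Fintype.card A = κ) (hκ2 : 2 ≤ κ) (hℓ : 1 ≤ ℓ)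
    (q : ℝ) (hq0 : 0 < q) (hq1 : q < ((κ : ℝ) - 1) / κ)
    (σ : ℝ) (hσ : 1 < σ) (wstar : Fin ℓ → A)
    (f : (Fin ℓ → A) → ℝ) (hf : ∀ u, f u = if u = wstar then σ else 1)
    (M : Matrix (Fin ℓ → A) (Fin ℓ → A) ℝ)
    (hM : ∀ u v, M u v =
      (q / ((κ : ℝ) - 1)) ^ hammingDist u v * (1 - q) ^ (ℓ - hammingDist u v))
    (x : (Fin ℓ → A) → ℝ) (hx0 : ∀ u, 0 ≤ x u) (hx1 : ∑ u, x u = 1)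
    (hqs : ∀ u, x u * (∑ v, x v * f v) = ∑ v, x v * f v * M v u)
    (lam : ℝ) (hlam : lam = ∑ v, x v * f v) :
    σ * (1 - κ * q / ((κ : ℝ) - 1)) ^ ((((κ : ℝ) - 1) * ℓ) / κ : ℝ) ≤ lam := by
  have hκR : (2 : ℝ) ≤ (κ : ℝ) := by exact_mod_cast hκ2
  have hκ1 : (0 : ℝ) < (κ : ℝ) - 1 := by linarith
  have hκ0 : (0 : ℝ) < (κ : ℝ) := by linarith
  -- basic positivity facts
  have hq1' : q < 1 := lt_of_lt_of_le hq1 (by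
    rw [div_le_one hκ0]; linarith)
  have h1q : (0 : ℝ) < 1 - q := by linarith
  have hρ : (0 : ℝ) < 1 - κ * q / ((κ : ℝ) - 1) := by
    have h := (lt_div_iff₀ hκ0).mp hq1
    rw [sub_pos, div_lt_one hκ1]; nlinarith
  have hfpos : ∀ v, 0 < f v := by
    intro v; rw [hf v]; split <;> linarith
  have hMpos : ∀ u v, 0 < M u v := by
    intro u v
    rw [hM u v]
    exact mul_pos (pow_pos (div_pos hq0 hκ1) _) (pow_pos h1q _)
  -- x wstar > 0
  have hxw : 0 < x wstar := by
    rcases lt_or_eq_of_le (hx0 wstar) with h | h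
    · exact h
    · exfalso
      have h0 : (0:ℝ) = ∑ v, x v * f v * M v wstar := by
        have t := hqs wstar; rw [← h, zero_mul] at t; exact t
      have hall : ∀ v ∈ Finset.univ, x v * f v * M v wstar = 0 := by
        have := (Finset.sum_eq_zero_iff_of_nonneg (fun v _ =>
          mul_nonneg (mul_nonneg (hx0 v) (hfpos v).le) (hMpos v wstar).le)).mp h0.symm
        exact this
      have hxz : ∀ v, x v = 0 := by
        intro v
        have := hall v (Finset.mem_univ v)
        rcases mul_eq_zero.mp this with h1 | h2
        · rcases mul_eq_zero.mp h1 with h3 | h4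
          · exact h3
          · exact absurd h4 (hfpos v).ne'
        · exact absurd h2 (hMpos v wstar).ne'
      have : (1:ℝ) = 0 := by rw [← hx1]; exact Finset.sum_eq_zero (fun v _ => hxz v)
      norm_num at this
  -- lam ≥ σ (1-q)^ℓ
  have hkey : σ * (1 - q) ^ ℓ ≤ lam := by
    have hqsw := hqs wstar
    have hterm : x wstar * f wstar * M wstar wstar ≤ ∑ v, x v * f v * M v wstar :=
      Finset.single_le_sum (f := fun v => x v * f v * M v wstar)
        (fun v _ => mul_nonneg (mul_nonneg (hx0 v) (hfpos v).le) (hMpos v wstar).le)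
        (Finset.mem_univ wstar)
    have hMw : M wstar wstar = (1 - q) ^ ℓ := by
      rw [hM wstar wstar, hammingDist_self]; simp
    have hfw : f wstar = σ := by rw [hf wstar]; simp
    rw [hMw, hfw] at hterm
    have : x wstar * (σ * (1 - q) ^ ℓ) ≤ x wstar * lam := by
      rw [hlam, hqsw]
      have heq : x wstar * (σ * (1 - q) ^ ℓ) = x wstar * σ * (1 - q) ^ ℓ := by ring
      rw [heq]; exact hterm
    exact le_of_mul_le_mul_left this hxw
  -- (1 - κq/(κ-1))^{(κ-1)ℓ/κ} ≤ (1-q)^ℓ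
  have hpow : (1 - κ * q / ((κ : ℝ) - 1)) ^ ((((κ : ℝ) - 1) * ℓ) / κ : ℝ) ≤ (1 - q) ^ ℓ := by
    set ρ : ℝ := 1 - κ * q / ((κ : ℝ) - 1) with hρdef
    have hr : (0:ℝ) < ((κ : ℝ) - 1) / κ := div_pos hκ1 hκ0
    -- Bernoulli: ρ ≤ (1-q)^{κ/(κ-1)}
    have hbern : ρ ≤ (1 - q) ^ ((κ : ℝ) / ((κ : ℝ) - 1)) := by
      have hb := one_add_mul_self_le_rpow_one_add (s := -q) (by linarith : (-1:ℝ) ≤ -q)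
        (p := (κ : ℝ) / ((κ : ℝ) - 1)) (by rw [le_div_iff₀ hκ1]; linarith)
      have h1 : 1 + (κ : ℝ) / ((κ : ℝ) - 1) * (-q) = ρ := by
        rw [hρdef]; field_simp; ring
      have h2 : (1 : ℝ) + -q = 1 - q := by ring
      rw [h1, h2] at hb
      exact hb
    -- raise to power (κ-1)/κ
    have hstep : ρ ^ (((κ : ℝ) - 1) / κ) ≤ 1 - q := by
      have := Real.rpow_le_rpow hρ.le hbern hr.le
      rwa [← Real.rpow_mul h1q.le,
        show (κ : ℝ) / ((κ : ℝ) - 1) * (((κ : ℝ) - 1) / κ) = 1 by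
          field_simp, Real.rpow_one] at this
    -- conclude
    have hρr : 0 ≤ ρ ^ (((κ : ℝ) - 1) / κ) := Real.rpow_nonneg hρ.le _
    calc ρ ^ ((((κ : ℝ) - 1) * ℓ) / κ : ℝ)
        = (ρ ^ (((κ : ℝ) - 1) / κ)) ^ ℓ := by
          rw [← Real.rpow_natCast (ρ ^ (((κ : ℝ) - 1) / κ)) ℓ, ← Real.rpow_mul hρ.le]
          ring_nf
      _ ≤ (1 - q) ^ ℓ := pow_le_pow_left₀ hρr hstep ℓ
  calc σ * (1 - κ * q / ((κ : ℝ) - 1)) ^ ((((κ : ℝ) - 1) * ℓ) / κ : ℝ)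
      ≤ σ * (1 - q) ^ ℓ := by
        exact mul_le_mul_of_nonneg_left hpow (by linarith)
    _ ≤ lam := hkey
end

section
/- (Covariance identity for a general fitness landscape.) Let f : E → ℝ be any fitness function with f ≥ 1 and f not identically 1, let x be a quasispecies solution for f with mean fitness λ = Σ_u f(u) x(u) = f̄. Let g : 𝒜 → ℝ and define G : E → ℝ by G(u) = Σ_{i=1}^{ℓ} g(u(i)). Set ḡ = (1/κ) Σ_{a∈𝒜} g(a), Ḡ = Σ_u G(u) x(u), and (fG)‾ = Σ_u f(u) G(u) x(u). Then f̄ · Ḡ = ρ · (fG)‾ + ℓ(1−ρ)· f̄ · ḡ, where ρ = 1 − κq/(κ−1). -/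
/-!
The mutation matrix is the `ℓ`-fold product of the one-letter kernel
`m(a, b) = if a = b then 1 - q else q / (κ - 1)`, whose rows sum to `1` and which satisfies
`∑_b m(a, b) g(b) = ρ g(a) + (1 - ρ) ḡ`. Since `G` is a sum of one-letter functions, the
mutants of `v` therefore have mean `ρ G(v) + ℓ (1 - ρ) ḡ`. Pairing the quasispecies equation
`λ x = (x f) M` with `G` turns `λ Ḡ` into the `x f`-weighted mean of this expression, which is
the identity.
-/

open Finset

theorem prod_ite_eq_pow_hammingDist {ι β M : Type*} [Fintype ι] [DecidableEq β] [CommMonoid M]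
    (v u : ι → β) (s t : M) :
    ∏ i, (if v i = u i then s else t) =
      s ^ (Fintype.card ι - hammingDist v u) * t ^ hammingDist v u := by
  have hcard : #{i | v i = u i} = Fintype.card ι - hammingDist v u := by
    have hsplit := card_filter_add_card_filter_not (s := univ) (fun i => v i = u i)
    rw [card_univ] at hsplit
    unfold hammingDist
    simp only [ne_eq]
    omega
  rw [prod_ite, prod_const, prod_const, hcard]
  rfl

theorem sum_prod_mul_apply {ι β R : Type*} [Fintype ι] [DecidableEq ι] [Fintype β]
    [CommSemiring R] {m : β → β → R} (hm : ∀ a, ∑ b, m a b = 1) (v : ι → β) (j : ι)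
    (g : β → R) :
    ∑ u : ι → β, (∏ i, m (v i) (u i)) * g (u j) = ∑ b, m (v j) b * g b := by
  have hfactor : ∀ u : ι → β, (∏ i, m (v i) (u i)) * g (u j) =
      ∏ i, m (v i) (u i) * (if i = j then g (u i) else 1) := by
    intro u
    rw [prod_mul_distrib, prod_ite_eq' univ j (fun i => g (u i)), if_pos (mem_univ j)]
  -- the sum over words is a product of one-letter sums, all but the `j`-th equal to `1`
  simp_rw [hfactor, ← Fintype.prod_sum (fun i b => m (v i) b * (if i = j then g b else 1))]
  rw [prod_eq_single j (fun i _ hij => by simp only [if_neg hij, mul_one, hm])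
    (fun h => absurd (mem_univ j) h)]
  simp

theorem sum_prod_mul_sum_apply {ι β R : Type*} [Fintype ι] [DecidableEq ι] [Fintype β]
    [CommSemiring R] {m : β → β → R} (hm : ∀ a, ∑ b, m a b = 1) (v : ι → β)
    (g : β → R) :
    ∑ u : ι → β, (∏ i, m (v i) (u i)) * ∑ j, g (u j) = ∑ j, ∑ b, m (v j) b * g b := by
  simp_rw [mul_sum]
  rw [sum_comm]
  exact sum_congr rfl fun j _ => sum_prod_mul_apply hm v j g

theorem mul_sum_mul_eq_sum_mul_sum_of_eq_sum_mul {E R : Type*} [Fintype E] [CommSemiring R]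
    {M : Matrix E E R} {x w : E → R} {c : R} (h : ∀ u, x u * c = ∑ v, w v * M v u)
    (G : E → R) :
    c * ∑ u, G u * x u = ∑ v, w v * ∑ u, M v u * G u := by
  calc c * ∑ u, G u * x u = ∑ u, G u * ∑ v, w v * M v u := by
        rw [mul_sum]; exact sum_congr rfl fun u _ => by rw [← h]; ring
    _ = ∑ v, w v * ∑ u, M v u * G u := by
        simp_rw [mul_sum]
        rw [sum_comm]
        exact sum_congr rfl fun v _ => sum_congr rfl fun u _ => by ring

namespace Quasispecies

variable {A : Type*} [Fintype A] [DecidableEq A]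

noncomputable def siteKernel (q : ℝ) (a b : A) : ℝ :=
  if a = b then 1 - q else q / (Fintype.card A - 1)

theorem prod_siteKernel {ℓ : ℕ} (q : ℝ) (v u : Fin ℓ → A) :
    ∏ i, siteKernel q (v i) (u i) =
      (q / (Fintype.card A - 1)) ^ hammingDist v u * (1 - q) ^ (ℓ - hammingDist v u) := by
  simp only [siteKernel]
  rw [prod_ite_eq_pow_hammingDist, Fintype.card_fin, mul_comm]

theorem siteKernel_eq (hA : Fintype.card A ≠ 1) (q : ℝ) (a b : A) :
    siteKernel q a b = q / (Fintype.card A - 1) +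
      if a = b then 1 - Fintype.card A * q / (Fintype.card A - 1) else 0 := by
  have : (Fintype.card A : ℝ) - 1 ≠ 0 := sub_ne_zero.2 (by exact_mod_cast hA)
  unfold siteKernel
  split_ifs <;> field_simp <;> ring

theorem sum_siteKernel (hA : Fintype.card A ≠ 1) (q : ℝ) (a : A) :
    ∑ b, siteKernel q a b = 1 := by
  have : (Fintype.card A : ℝ) - 1 ≠ 0 := sub_ne_zero.2 (by exact_mod_cast hA)
  simp_rw [siteKernel_eq hA, sum_add_distrib, sum_ite_eq, if_pos (mem_univ a), sum_const,
    card_univ, nsmul_eq_mul]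
  field_simp
  ring

theorem sum_siteKernel_mul (hA : Fintype.card A ≠ 1) (q : ℝ) (a : A) (g : A → ℝ) :
    ∑ b, siteKernel q a b * g b =
      (1 - Fintype.card A * q / (Fintype.card A - 1)) * g a +
        Fintype.card A * q / (Fintype.card A - 1) * (1 / Fintype.card A * ∑ b, g b) := by
  have : Nonempty A := ⟨a⟩
  have : (Fintype.card A : ℝ) ≠ 0 := Nat.cast_ne_zero.2 Fintype.card_ne_zero
  simp_rw [siteKernel_eq hA, add_mul, ite_mul, zero_mul, sum_add_distrib, sum_ite_eq,
    if_pos (mem_univ a), ← mul_sum]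
  field_simp
  ring

end Quasispecies

theorem covariance_identity_general_landscape_general
    (A : Type*) [Fintype A] [DecidableEq A] (κ ℓ : ℕ)
    (hκ : Fintype.card A = κ) (hκ2 : 2 ≤ κ)
    (q : ℝ)
    (ρ : ℝ) (hρ : ρ = 1 - κ * q / ((κ : ℝ) - 1))
    (f : (Fin ℓ → A) → ℝ)
    (M : Matrix (Fin ℓ → A) (Fin ℓ → A) ℝ)
    (hM : ∀ u v, M u v =
      (q / ((κ : ℝ) - 1)) ^ hammingDist u v * (1 - q) ^ (ℓ - hammingDist u v))
    (x : (Fin ℓ → A) → ℝ)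
    (hqs : ∀ u, x u * (∑ v, x v * f v) = ∑ v, x v * f v * M v u)
    (lam : ℝ) (hlam : lam = ∑ v, x v * f v)
    (g : A → ℝ) (G : (Fin ℓ → A) → ℝ) (hG : ∀ u, G u = ∑ i, g (u i))
    (gbar : ℝ) (hgbar : gbar = (1 / (κ : ℝ)) * ∑ b, g b)
    (Gbar : ℝ) (hGbar : Gbar = ∑ u, G u * x u)
    (fGbar : ℝ) (hfGbar : fGbar = ∑ u, f u * G u * x u) :
    lam * Gbar = ρ * fGbar + ℓ * (1 - ρ) * lam * gbar := by
  subst hκ hlam hGbar hfGbar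
  have hA : Fintype.card A ≠ 1 := by omega
  have hMG : ∀ v, ∑ u, M v u * G u = ρ * G v + ℓ * (1 - ρ) * gbar := by
    intro v
    simp_rw [hM, ← Quasispecies.prod_siteKernel, hG,
      sum_prod_mul_sum_apply (Quasispecies.sum_siteKernel hA q),
      Quasispecies.sum_siteKernel_mul hA, sum_add_distrib, ← mul_sum, sum_const, card_univ,
      Fintype.card_fin, nsmul_eq_mul, hρ, hgbar]
    ring
  rw [mul_sum_mul_eq_sum_mul_sum_of_eq_sum_mul hqs]
  simp only [hMG, mul_sum, sum_mul, ← sum_add_distrib]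
  exact sum_congr rfl fun v _ => by ring

/-- Covariance identity for a general fitness landscape on `𝒜^ℓ`:
`f̄ Ḡ = ρ (fG)‾ + ℓ(1-ρ) f̄ ḡ` for any additive functional `G(u) = ∑ᵢ g(u(i))`. -/
theorem covariance_identity_general_landscape
    (A : Type*) [Fintype A] [DecidableEq A] (κ ℓ : ℕ)
    (hκ : Fintype.card A = κ) (hκ2 : 2 ≤ κ) (hℓ : 1 ≤ ℓ)
    (q : ℝ) (hq0 : 0 < q) (hq1 : q < ((κ : ℝ) - 1) / κ)
    (ρ : ℝ) (hρ : ρ = 1 - κ * q / ((κ : ℝ) - 1))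
    (f : (Fin ℓ → A) → ℝ) (hf1 : ∀ u, 1 ≤ f u) (hfne : ∃ u, f u ≠ 1)
    (M : Matrix (Fin ℓ → A) (Fin ℓ → A) ℝ)
    (hM : ∀ u v, M u v =
      (q / ((κ : ℝ) - 1)) ^ hammingDist u v * (1 - q) ^ (ℓ - hammingDist u v))
    (x : (Fin ℓ → A) → ℝ) (hx0 : ∀ u, 0 ≤ x u) (hx1 : ∑ u, x u = 1)
    (hqs : ∀ u, x u * (∑ v, x v * f v) = ∑ v, x v * f v * M v u)
    (lam : ℝ) (hlam : lam = ∑ v, x v * f v)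
    (g : A → ℝ) (G : (Fin ℓ → A) → ℝ) (hG : ∀ u, G u = ∑ i, g (u i))
    (gbar : ℝ) (hgbar : gbar = (1 / (κ : ℝ)) * ∑ b, g b)
    (Gbar : ℝ) (hGbar : Gbar = ∑ u, G u * x u)
    (fGbar : ℝ) (hfGbar : fGbar = ∑ u, f u * G u * x u) :
    lam * Gbar = ρ * fGbar + ℓ * (1 - ρ) * lam * gbar :=
  covariance_identity_general_landscape_general A κ ℓ hκ hκ2 q ρ hρ f M hM x hqs lam hlam g G hG
    gbar hgbar Gbar hGbar fGbar hfGbar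
end

section
/- For any fitness function f : E → ℝ with f ≥ 1 and f not identically 1, the mean fitness λ of any quasispecies solution for f on E = 𝒜^ℓ satisfies λ ≥ (max_{u∈E} f(u)) · (1−q)^ℓ. -/
open scoped BigOperators

/-- General lower bound on the mean fitness:
`λ ≥ (max_u f(u)) (1-q)^ℓ` for any fitness function `f ≥ 1` not identically `1`. -/
theorem mean_fitness_general_lower_bound
    (A : Type*) [Fintype A] [DecidableEq A] [Nonempty A] (κ ℓ : ℕ)
    (hκ : Fintype.card A = κ) (hκ2 : 2 ≤ κ) (hℓ : 1 ≤ ℓ)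
    (q : ℝ) (hq0 : 0 < q) (hq1 : q < ((κ : ℝ) - 1) / κ)
    (f : (Fin ℓ → A) → ℝ) (hf1 : ∀ u, 1 ≤ f u) (hfne : ∃ u, f u ≠ 1)
    (M : Matrix (Fin ℓ → A) (Fin ℓ → A) ℝ)
    (hM : ∀ u v, M u v =
      (q / ((κ : ℝ) - 1)) ^ hammingDist u v * (1 - q) ^ (ℓ - hammingDist u v))
    (x : (Fin ℓ → A) → ℝ) (hx0 : ∀ u, 0 ≤ x u) (hx1 : ∑ u, x u = 1)
    (hqs : ∀ u, x u * (∑ v, x v * f v) = ∑ v, x v * f v * M v u)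
    (lam : ℝ) (hlam : lam = ∑ v, x v * f v) :
    (⨆ u, f u) * (1 - q) ^ ℓ ≤ lam := by
  have hκR : (2 : ℝ) ≤ (κ : ℝ) := by exact_mod_cast hκ2
  have hκpos : (0 : ℝ) < κ := by linarith
  have hratio : ((κ : ℝ) - 1) / κ < 1 := by
    rw [div_lt_one hκpos]; linarith
  have hqlt1 : q < 1 := lt_trans hq1 hratio
  have h1q : (0 : ℝ) < 1 - q := by linarith
  have hqk : (0 : ℝ) < q / ((κ : ℝ) - 1) := by
    apply div_pos hq0; linarith
  have hMpos : ∀ u v, 0 < M u v := by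
    intro u v
    rw [hM]
    exact mul_pos (pow_pos hqk _) (pow_pos h1q _)
  have hMdiag : ∀ u, M u u = (1 - q) ^ ℓ := by
    intro u
    rw [hM, hammingDist_self, pow_zero, Nat.sub_zero, one_mul]
  -- each term x v * f v is nonnegative
  have hxf : ∀ v, 0 ≤ x v * f v := fun v =>
    mul_nonneg (hx0 v) (le_trans zero_le_one (hf1 v))
  -- lam ≥ 1
  have hlam1 : (1 : ℝ) ≤ lam := by
    rw [hlam, ← hx1]
    apply Finset.sum_le_sum
    intro v _
    nth_rewrite 1 [← mul_one (x v)]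
    exact mul_le_mul_of_nonneg_left (hf1 v) (hx0 v)
  have hlampos : (0 : ℝ) < lam := lt_of_lt_of_le zero_lt_one hlam1
  -- argmax of f
  obtain ⟨u0, hu0⟩ := Finite.exists_max f
  have hsup : (⨆ u, f u) = f u0 := by
    apply le_antisymm
    · exact ciSup_le hu0
    · exact le_ciSup (Set.Finite.bddAbove (Set.finite_range f)) u0
  -- there is v0 with x v0 * f v0 > 0
  obtain ⟨v0, _, hv0⟩ := Finset.exists_lt_of_sum_lt (f := fun _ => (0 : ℝ))
    (g := fun v => x v * f v) (by
      rw [Finset.sum_const_zero]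
      rw [hlam] at hlampos
      exact hlampos)
  -- x u0 > 0
  have hx0pos : 0 < x u0 := by
    have hkey := hqs u0
    rw [← hlam] at hkey
    have hterm : 0 < x v0 * f v0 * M v0 u0 := mul_pos hv0 (hMpos v0 u0)
    have hsum : x v0 * f v0 * M v0 u0 ≤ ∑ v, x v * f v * M v u0 := by
      apply Finset.single_le_sum (f := fun v => x v * f v * M v u0)
      · intro v _
        exact mul_nonneg (hxf v) (le_of_lt (hMpos v u0))
      · exact Finset.mem_univ v0
    have : 0 < x u0 * lam := by
      rw [hkey]; exact lt_of_lt_of_le hterm hsum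
    nlinarith [this, hx0 u0]
  -- main inequality at u0
  have hkey := hqs u0
  rw [← hlam] at hkey
  have hsum : x u0 * f u0 * M u0 u0 ≤ ∑ v, x v * f v * M v u0 := by
    apply Finset.single_le_sum (f := fun v => x v * f v * M v u0)
    · intro v _
      exact mul_nonneg (hxf v) (le_of_lt (hMpos v u0))
    · exact Finset.mem_univ u0
  rw [hMdiag] at hsum
  have hfinal : x u0 * (f u0 * (1 - q) ^ ℓ) ≤ x u0 * lam := by
    rw [hkey]
    calc x u0 * (f u0 * (1 - q) ^ ℓ) = x u0 * f u0 * (1 - q) ^ ℓ := by ring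
    _ ≤ _ := hsum
  rw [hsup]
  exact le_of_mul_le_mul_left hfinal hx0pos
end

section
/- Any quasispecies solution x (for a positive stochastic mutation matrix and a fitness function f ≥ 1 not identically 1) satisfies the fixed-point identity x^t = x^t (F − I) Σ_{n≥1} Mⁿ/λⁿ, i.e. for every u ∈ E: x(u) = Σ_{v∈E} x(v)·(f(v)−1)·Σ_{n≥1} λ^{−n} (Mⁿ)(v,u), where λ = Σ_v x(v) f(v) > 1 is the mean fitness (so the series converges). -/
open scoped BigOperators
set_option maxHeartbeats 1000000

/-- Fixed point identity for a general landscape: any quasispecies solution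
satisfies `x(u) = ∑_v x(v)(f(v)-1) ∑_{n≥1} λ^{-n} (Mⁿ)(v,u)` where `λ > 1`
is the mean fitness. -/
theorem quasispecies_fixed_point_identity
    (E : Type*) [Fintype E] [DecidableEq E] [Nonempty E]
    (M : Matrix E E ℝ) (hMpos : ∀ u v, 0 < M u v) (hMrow : ∀ u, ∑ v, M u v = 1)
    (f : E → ℝ) (hf1 : ∀ u, 1 ≤ f u) (hfne : ∃ u, f u ≠ 1)
    (x : E → ℝ) (hx0 : ∀ u, 0 ≤ x u) (hx1 : ∑ u, x u = 1)
    (hqs : ∀ u, x u * (∑ v, x v * f v) = ∑ v, x v * f v * M v u)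
    (lam : ℝ) (hlam : lam = ∑ v, x v * f v) :
    1 < lam ∧
      ∀ u, x u = ∑ v, x v * (f v - 1) * ∑' n : ℕ, (lam ^ (n + 1))⁻¹ * (M ^ (n + 1)) v u := by
  -- basic facts
  have hxf0 : ∀ v, 0 ≤ x v * f v := fun v =>
    mul_nonneg (hx0 v) (le_trans zero_le_one (hf1 v))
  have hlam1 : 1 ≤ lam := by
    rw [hlam, ← hx1]
    exact Finset.sum_le_sum fun v _ => le_mul_of_one_le_right (hx0 v) (hf1 v)
  have hlam0 : 0 < lam := lt_of_lt_of_le one_pos hlam1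
  -- some coordinate is positive
  have hxex : ∃ v, 0 < x v := by
    by_contra h
    push_neg at h
    have : ∑ u, x u = 0 := Finset.sum_eq_zero fun v _ => le_antisymm (h v) (hx0 v)
    rw [hx1] at this; norm_num at this
  -- all coordinates are positive
  have hxpos : ∀ u, 0 < x u := by
    intro u
    obtain ⟨v0, hv0⟩ := hxex
    have hsum : 0 < ∑ v, x v * f v * M v u := by
      apply Finset.sum_pos'
      · exact fun v _ => mul_nonneg (hxf0 v) (hMpos v u).le
      · exact ⟨v0, Finset.mem_univ v0,
          mul_pos (mul_pos hv0 (lt_of_lt_of_le one_pos (hf1 v0))) (hMpos v0 u)⟩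
    have := hqs u
    rw [← hlam] at this
    nlinarith
  -- mean fitness exceeds 1
  obtain ⟨u0, hu0⟩ := hfne
  have hu0' : 1 < f u0 := lt_of_le_of_ne (hf1 u0) (Ne.symm hu0)
  have hLgt : 1 < lam := by
    rw [hlam, ← hx1]
    apply Finset.sum_lt_sum
    · exact fun v _ => le_mul_of_one_le_right (hx0 v) (hf1 v)
    · exact ⟨u0, Finset.mem_univ u0, by nlinarith [hxpos u0]⟩
  refine ⟨hLgt, ?_⟩
  have hlamne : lam ≠ 0 := ne_of_gt hlam0
  -- powers of M are nonnegative with row sums 1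
  have hpow0 : ∀ n v u, 0 ≤ (M ^ n) v u := by
    intro n
    induction n with
    | zero => intro v u; simp [Matrix.one_apply]; positivity
    | succ n ih =>
      intro v u
      rw [pow_succ, Matrix.mul_apply]
      exact Finset.sum_nonneg fun w _ => mul_nonneg (ih v w) (hMpos w u).le
  have hpowrow : ∀ n v, ∑ u, (M ^ n) v u = 1 := by
    intro n
    induction n with
    | zero => intro v; simp [Matrix.one_apply]
    | succ n ih =>
      intro v
      simp only [pow_succ, Matrix.mul_apply]
      rw [Finset.sum_comm]
      simp only [← Finset.mul_sum, hMrow]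
      simpa using ih v
  have hpowle1 : ∀ n v u, (M ^ n) v u ≤ 1 := by
    intro n v u
    calc (M ^ n) v u ≤ ∑ w, (M ^ n) v w :=
          Finset.single_le_sum (fun w _ => hpow0 n v w) (Finset.mem_univ u)
      _ = 1 := hpowrow n v
  -- key algebraic step
  have hstep : ∀ (A : Matrix E E ℝ) (u : E),
      ∑ v, x v * f v * (M * A) v u = lam * ∑ w, x w * A w u := by
    intro A u
    simp only [Matrix.mul_apply, Finset.mul_sum]
    rw [Finset.sum_comm]
    refine Finset.sum_congr rfl fun w _ => ?_
    have h1 : ∑ v, x v * f v * (M v w * A w u) = (∑ v, x v * f v * M v w) * A w u := by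
      rw [Finset.sum_mul]
      exact Finset.sum_congr rfl fun v _ => by ring
    rw [h1, ← hqs w, ← hlam]
    ring
  -- remainder recursion
  set a : ℕ → E → ℝ :=
    fun n u => ∑ v, x v * (f v - 1) * ((lam ^ (n + 1))⁻¹ * (M ^ (n + 1)) v u) with ha
  set r : ℕ → E → ℝ := fun n u => (lam ^ n)⁻¹ * ∑ v, x v * (M ^ n) v u with hr
  have hrec : ∀ n u, r n u = a n u + r (n + 1) u := by
    intro n u
    have key : lam * ∑ v, x v * (M ^ n) v u = ∑ v, x v * f v * (M ^ (n + 1)) v u := by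
      rw [pow_succ']
      exact (hstep (M ^ n) u).symm
    have hrhs : a n u + r (n + 1) u
        = (lam ^ (n + 1))⁻¹ * ∑ v, x v * f v * (M ^ (n + 1)) v u := by
      simp only [ha, hr, Finset.mul_sum, ← Finset.sum_add_distrib]
      refine Finset.sum_congr rfl fun v _ => ?_
      ring
    rw [hrhs, ← key, hr]
    field_simp
    ring
  have hpart : ∀ N u, x u = (∑ n ∈ Finset.range N, a n u) + r N u := by
    intro N u
    induction N with
    | zero =>
      have h1 : ∑ v, x v * (1 : Matrix E E ℝ) v u = x u := by
        rw [Finset.sum_eq_single u]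
        · simp [Matrix.one_apply]
        · intro v _ hv; simp [Matrix.one_apply, hv]
        · intro h; exact absurd (Finset.mem_univ u) h
      simp [hr, h1]
    | succ N ih =>
      rw [Finset.sum_range_succ, ih, hrec N u]
      ring
  -- summability of each inner series
  have hinv1 : |lam⁻¹| < 1 := by
    rw [abs_of_pos (inv_pos.mpr hlam0)]
    exact inv_lt_one_of_one_lt₀ hLgt
  have hterm_nonneg : ∀ v u n, 0 ≤ (lam ^ (n + 1))⁻¹ * (M ^ (n + 1)) v u :=
    fun v u n => mul_nonneg (inv_nonneg.mpr (pow_nonneg hlam0.le _)) (hpow0 _ v u)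
  have hsummable : ∀ v u, Summable fun n : ℕ => (lam ^ (n + 1))⁻¹ * (M ^ (n + 1)) v u := by
    intro v u
    apply Summable.of_nonneg_of_le (f := fun n => (lam⁻¹) ^ (n + 1))
      (hterm_nonneg v u)
    · intro n
      calc (lam ^ (n + 1))⁻¹ * (M ^ (n + 1)) v u
          ≤ (lam ^ (n + 1))⁻¹ * 1 := by
            exact mul_le_mul_of_nonneg_left (hpowle1 _ v u)
              (inv_nonneg.mpr (pow_nonneg hlam0.le _))
        _ = (lam ^ (n + 1))⁻¹ := mul_one _
        _ = (lam⁻¹) ^ (n + 1) := (inv_pow lam (n + 1)).symm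
    · have hg : Summable fun n : ℕ => lam⁻¹ * lam⁻¹ ^ n :=
        (summable_geometric_of_abs_lt_one hinv1).mul_left _
      exact hg.congr fun n => (pow_succ' lam⁻¹ n).symm
  have hsummable' : ∀ v u, Summable fun n : ℕ =>
      x v * (f v - 1) * ((lam ^ (n + 1))⁻¹ * (M ^ (n + 1)) v u) :=
    fun v u => (hsummable v u).mul_left _
  -- remainder tends to 0
  have hrtend : ∀ u, Filter.Tendsto (fun N => r N u) Filter.atTop (nhds 0) := by
    intro u
    have h0 : Filter.Tendsto (fun N : ℕ => (lam⁻¹) ^ N) Filter.atTop (nhds 0) :=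
      tendsto_pow_atTop_nhds_zero_of_abs_lt_one hinv1
    refine tendsto_of_tendsto_of_tendsto_of_le_of_le tendsto_const_nhds h0 ?_ ?_
    · intro N
      exact mul_nonneg (inv_nonneg.mpr (pow_nonneg hlam0.le _))
        (Finset.sum_nonneg fun v _ => mul_nonneg (hx0 v) (hpow0 N v u))
    · intro N
      simp only [hr]
      calc (lam ^ N)⁻¹ * ∑ v, x v * (M ^ N) v u
          ≤ (lam ^ N)⁻¹ * 1 := by
            apply mul_le_mul_of_nonneg_left _ (inv_nonneg.mpr (pow_nonneg hlam0.le _))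
            rw [← hx1]
            exact Finset.sum_le_sum fun v _ =>
              mul_le_of_le_one_right (hx0 v) (hpowle1 N v u)
        _ = (lam⁻¹) ^ N := by rw [mul_one, inv_pow]
  intro u
  -- partial sums of `a · u` tend to x u
  have hasum : HasSum (fun n => a n u) (x u) := by
    have hS : Summable fun n => a n u := by
      apply summable_sum (s := Finset.univ)
      intro v _
      exact hsummable' v u
    rw [hS.hasSum_iff_tendsto_nat]
    have : (fun N => ∑ n ∈ Finset.range N, a n u) = fun N => x u - r N u := by
      funext N
      have := hpart N u
      linarith
    rw [this]
    simpa using (tendsto_const_nhds (x := x u)).sub (hrtend u)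
  have hx_eq : x u = ∑' n, a n u := hasum.tsum_eq.symm
  rw [hx_eq, ha]
  rw [Summable.tsum_finsetSum fun v _ => hsummable' v u]
  refine Finset.sum_congr rfl fun v _ => ?_
  exact tsum_mul_left
end

section
/- For even ℓ and 0 ≤ b, c ≤ ℓ, define M^n_H(b,c) = Σ_{j+j'=c} C(b,j)((1+ρⁿ)/2)^j((1−ρⁿ)/2)^{b−j} · C(ℓ−b,j')((1−ρⁿ)/2)^{j'}((1+ρⁿ)/2)^{ℓ−b−j'}, the probability that the sum of two independent binomial random variables with parameters (b,(1+ρⁿ)/2) and (ℓ−b,(1−ρⁿ)/2) equals c, where ρ = 1−2q. Then for every fixed n ≥ 1 and a ≥ 0, along any sequences ℓ_m → ∞ (ℓ_m even), q_m → 0 with ℓ_m q_m → a, we have M^n_H(ℓ_m/2, ℓ_m/2) → φ_n(a) = e^{−an} Σ_{k≥0} (an)^{2k}/(2^{2k}(k!)²). -/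
open scoped BigOperators
open Filter Topology

/-- `MH ℓ ρ n b c` is the probability that the sum of two independent binomial
random variables with parameters `(b, (1+ρⁿ)/2)` and `(ℓ-b, (1-ρⁿ)/2)`
equals `c`, written as the explicit convolution sum
`∑_{j+j'=c} C(b,j)((1+ρⁿ)/2)^j((1-ρⁿ)/2)^{b-j} ·
C(ℓ-b,j')((1-ρⁿ)/2)^{j'}((1+ρⁿ)/2)^{ℓ-b-j'}`. -/
noncomputable def MH (ℓ : ℕ) (ρ : ℝ) (n : ℕ) (b c : ℕ) : ℝ :=
  ∑ j ∈ Finset.range (c + 1),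
    (Nat.choose b j : ℝ) * ((1 + ρ ^ n) / 2) ^ j * ((1 - ρ ^ n) / 2) ^ (b - j) *
      ((Nat.choose (ℓ - b) (c - j) : ℝ) * ((1 - ρ ^ n) / 2) ^ (c - j) *
        ((1 + ρ ^ n) / 2) ^ (ℓ - b - (c - j)))

/-!
Write `ℓ = 2L` and `p = (1 - ρⁿ)/2`. Reflecting the summation index turns `M^n_H(L, L)`
into `∑ₖ b(k; L, p)²`, the probability that two independent `Bin(L, p)` variables agree.
Since `L p → λ = an/2`, each binomial weight tends to the Poisson weight `e^{-λ} λᵏ/k!` and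
is bounded by `(Lp)ᵏ/k!`, so dominated convergence gives `∑ₖ (e^{-λ} λᵏ/k!)² = φₙ(a)`.
-/

open Real Nat

def binomialWeight (N : ℕ) (p : ℝ) (k : ℕ) : ℝ :=
  N.choose k * p ^ k * (1 - p) ^ (N - k)

lemma binomialWeight_nonneg {N : ℕ} {p : ℝ} (hp0 : 0 ≤ p) (hp1 : p ≤ 1) (k : ℕ) :
    0 ≤ binomialWeight N p k := by
  have : 0 ≤ 1 - p := sub_nonneg.2 hp1
  unfold binomialWeight
  positivity

lemma binomialWeight_le_pow_div_factorial {N : ℕ} {p : ℝ} (hp0 : 0 ≤ p) (hp1 : p ≤ 1)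
    (k : ℕ) :
    binomialWeight N p k ≤ (N * p) ^ k / k ! :=
  calc binomialWeight N p k ≤ N.choose k * p ^ k := by
        unfold binomialWeight
        exact mul_le_of_le_one_right (by positivity) (pow_le_one₀ (by linarith) (by linarith))
    _ ≤ N ^ k / k ! * p ^ k := by gcongr; exact Nat.choose_le_pow_div k N
    _ = (N * p) ^ k / k ! := by ring

lemma binomialWeight_eq_zero_of_lt {N k : ℕ} (p : ℝ) (h : N < k) :
    binomialWeight N p k = 0 := by
  simp [binomialWeight, Nat.choose_eq_zero_of_lt h]

section Limits

variable {α : Type*} {l : Filter α}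

lemma tendsto_zero_of_tendsto_natCast_mul {N : α → ℕ} {p : α → ℝ} {r : ℝ}
    (hN : Tendsto N l atTop) (hr : Tendsto (fun i => (N i : ℝ) * p i) l (𝓝 r)) :
    Tendsto p l (𝓝 0) := by
  refine tendsto_zero_of_isBoundedUnder_smul_of_tendsto_cobounded (f := fun i => (N i : ℝ))
    ?_ (tendsto_natCast_atTop_cobounded.comp hN)
  simpa only [smul_eq_mul] using hr.norm.isBoundedUnder_le

lemma tendsto_one_sub_pow_exp_of_tendsto {N : α → ℕ} {p : α → ℝ} {r : ℝ}
    (hp : Tendsto p l (𝓝 0)) (hr : Tendsto (fun i => (N i : ℝ) * p i) l (𝓝 r)) :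
    Tendsto (fun i => (1 - p i) ^ N i) l (𝓝 (exp (-r))) := by
  have hp1 : ∀ᶠ i in l, 0 < 1 - p i :=
    (hp.eventually (gt_mem_nhds one_pos)).mono fun _ h => sub_pos.2 h
  -- `1 - x⁻¹ ≤ log x ≤ x - 1` squeezes `N log (1 - p)` between `-N p / (1 - p)` and `-N p`.
  have hlog : Tendsto (fun i => (N i : ℝ) * log (1 - p i)) l (𝓝 (-r)) := by
    have hlower : Tendsto (fun i => -((N i : ℝ) * p i) / (1 - p i)) l (𝓝 (-r)) := by
      have := hr.neg.div (tendsto_const_nhds.sub hp) (by norm_num : (1 : ℝ) - 0 ≠ 0)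
      rwa [sub_zero, div_one] at this
    refine tendsto_of_tendsto_of_tendsto_of_le_of_le' hlower hr.neg ?_ ?_
    · filter_upwards [hp1] with i hi
      calc -((N i : ℝ) * p i) / (1 - p i) = N i * (1 - (1 - p i)⁻¹) := by field_simp; ring
        _ ≤ N i * log (1 - p i) := by gcongr; exact one_sub_inv_le_log_of_pos hi
    · filter_upwards [hp1] with i hi
      calc (N i : ℝ) * log (1 - p i) ≤ N i * (1 - p i - 1) := by
            gcongr; exact log_le_sub_one_of_pos hi
        _ = -(N i * p i) := by ring
  refine ((continuous_exp.tendsto _).comp hlog).congr' ?_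
  filter_upwards [hp1] with i hi
  simp [exp_nat_mul, exp_log hi]

open Asymptotics in
lemma tendsto_choose_mul_pow_of_tendsto_mul {N : α → ℕ} {p : α → ℝ} {r : ℝ}
    (hN : Tendsto N l atTop) (hr : Tendsto (fun i => (N i : ℝ) * p i) l (𝓝 r)) (k : ℕ) :
    Tendsto (fun i => (N i).choose k * p i ^ k) l (𝓝 (r ^ k / k !)) := by
  have hequiv : (fun i => ((N i).choose k : ℝ) * p i ^ k) ~[l]
      fun i => (N i * p i) ^ k / k ! :=
    calc (fun i => ((N i).choose k : ℝ) * p i ^ k)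
        ~[l] fun i => (N i : ℝ) ^ k / k ! * p i ^ k :=
          ((isEquivalent_choose k).comp_tendsto hN).mul IsEquivalent.refl
      _ = fun i => (N i * p i) ^ k / k ! := by ext; ring
  exact hequiv.tendsto_nhds_iff.2 ((hr.pow k).div_const _)

/-- The Poisson limit theorem along an arbitrary filter; Mathlib's
`ProbabilityTheory.tendsto_choose_mul_pow_of_tendsto_mul_atTop` is the case `N = id`. -/
theorem tendsto_binomialWeight {N : α → ℕ} {p : α → ℝ} {r : ℝ}
    (hN : Tendsto N l atTop) (hr : Tendsto (fun i => (N i : ℝ) * p i) l (𝓝 r)) (k : ℕ) :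
    Tendsto (fun i => binomialWeight (N i) (p i) k) l (𝓝 (exp (-r) * r ^ k / k !)) := by
  have hp := tendsto_zero_of_tendsto_natCast_mul hN hr
  have hr' : Tendsto (fun i => ((N i - k : ℕ) : ℝ) * p i) l (𝓝 r) := by
    have := hr.sub (hp.const_mul (k : ℝ))
    rw [mul_zero, sub_zero] at this
    refine this.congr' ?_
    filter_upwards [hN.eventually_ge_atTop k] with i hi
    rw [Nat.cast_sub hi]
    ring
  have := (tendsto_choose_mul_pow_of_tendsto_mul hN hr k).mul
    (tendsto_one_sub_pow_exp_of_tendsto hp hr')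
  rwa [mul_comm, ← mul_div_assoc] at this

theorem tendsto_sum_binomialWeight_sq {N : α → ℕ} {p : α → ℝ} {r : ℝ}
    (hN : Tendsto N l atTop) (hr : Tendsto (fun i => (N i : ℝ) * p i) l (𝓝 r))
    (hp0 : ∀ᶠ i in l, 0 ≤ p i) :
    Tendsto (fun i => ∑ k ∈ Finset.range (N i + 1), binomialWeight (N i) (p i) k ^ 2) l
      (𝓝 (∑' k, (exp (-r) * r ^ k / k !) ^ 2)) := by
  have hsum : ∀ i, ∑ k ∈ Finset.range (N i + 1), binomialWeight (N i) (p i) k ^ 2 =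
      ∑' k, binomialWeight (N i) (p i) k ^ 2 := fun i =>
    (tsum_eq_sum fun k hk => by
      rw [binomialWeight_eq_zero_of_lt _ (by simpa using hk), zero_pow two_ne_zero]).symm
  simp only [hsum]
  set c := |r| + 1
  -- Each weight is at most `c ^ k / k! ≤ exp c`, so its square is dominated by a summable series.
  refine tendsto_tsum_of_dominated_convergence (bound := fun k => exp c * (c ^ k / k !))
    ((summable_pow_div_factorial c).mul_left _) (fun k => (tendsto_binomialWeight hN hr k).pow 2) ?_
  have hp1 := (tendsto_zero_of_tendsto_natCast_mul hN hr).eventually (gt_mem_nhds one_pos)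
  have hNp := hr.eventually (gt_mem_nhds (lt_of_le_of_lt (le_abs_self r) (lt_add_one |r|)))
  filter_upwards [hp0, hp1, hNp] with i hp0 hp1 hNp k
  have hw0 := binomialWeight_nonneg (N := N i) hp0 hp1.le k
  have hwc : binomialWeight (N i) (p i) k ≤ c ^ k / k ! :=
    (binomialWeight_le_pow_div_factorial hp0 hp1.le k).trans (by gcongr)
  rw [Real.norm_eq_abs, abs_of_nonneg (by positivity), sq, mul_comm (exp c)]
  exact mul_le_mul hwc (hwc.trans (pow_div_factorial_le_exp c (by positivity) k)) hw0
    (by positivity)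

lemma tendsto_mul_one_sub_one_sub_pow {t x : α → ℝ} {c : ℝ} (hx : Tendsto x l (𝓝 0))
    (h : Tendsto (fun i => t i * x i) l (𝓝 c)) (n : ℕ) :
    Tendsto (fun i => t i * (1 - (1 - x i) ^ n)) l (𝓝 (n * c)) := by
  have hgeom : Tendsto (fun i => ∑ j ∈ Finset.range n, (1 - x i) ^ j) l (𝓝 n) := by
    simpa using tendsto_finsetSum (Finset.range n)
      fun j _ => ((tendsto_const_nhds (x := (1 : ℝ))).sub hx).pow j
  rw [mul_comm]
  refine (h.mul hgeom).congr fun i => ?_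
  linear_combination (-t i) * geom_sum_mul (1 - x i) n

end Limits

lemma MH_two_mul_eq_sum_binomialWeight_sq (L : ℕ) (ρ : ℝ) (n : ℕ) :
    MH (2 * L) ρ n L L =
      ∑ k ∈ Finset.range (L + 1), binomialWeight L ((1 - ρ ^ n) / 2) k ^ 2 := by
  rw [MH, ← Finset.sum_range_reflect]
  refine Finset.sum_congr rfl fun j hj => ?_
  have hjL : j ≤ L := Nat.lt_succ_iff.mp (Finset.mem_range.mp hj)
  rw [show 2 * L - L = L by omega, show L + 1 - 1 - j = L - j by omega, Nat.sub_sub_self hjL,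
    Nat.choose_symm hjL, binomialWeight, show 1 - (1 - ρ ^ n) / 2 = (1 + ρ ^ n) / 2 by ring]
  ring

theorem MH_middle_tendsto_phi_general
    (n : ℕ) (a : ℝ)
    (ℓ : ℕ → ℕ) (q : ℕ → ℝ)
    (hℓ : Tendsto ℓ atTop atTop) (heven : ∀ m, Even (ℓ m))
    (hq0 : ∀ m, 0 < q m) (hq1 : ∀ m, q m < 1 / 2)
    (hq : Tendsto q atTop (𝓝 0))
    (hlq : Tendsto (fun m => (ℓ m : ℝ) * q m) atTop (𝓝 a)) :
    Tendsto (fun m => MH (ℓ m) (1 - 2 * q m) n (ℓ m / 2) (ℓ m / 2)) atTop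
      (𝓝 (Real.exp (-a * n) *
        ∑' k : ℕ, (a * n) ^ (2 * k) / (2 ^ (2 * k) * ((Nat.factorial k : ℝ)) ^ 2))) := by
  set L : ℕ → ℕ := fun m => ℓ m / 2
  set p : ℕ → ℝ := fun m => (1 - (1 - 2 * q m) ^ n) / 2
  have hL : Tendsto L atTop atTop := (Nat.tendsto_div_const_atTop two_ne_zero).comp hℓ
  have hLp : Tendsto (fun m => (L m : ℝ) * p m) atTop (𝓝 (n * (a / 2))) := by
    have hx : Tendsto (fun m => 2 * q m) atTop (𝓝 0) := by simpa using hq.const_mul 2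
    have htx : Tendsto (fun m => (ℓ m : ℝ) / 4 * (2 * q m)) atTop (𝓝 (a / 2)) :=
      (hlq.div_const 2).congr fun m => by ring
    refine (tendsto_mul_one_sub_one_sub_pow hx htx n).congr fun m => ?_
    rw [Nat.cast_div (heven m).two_dvd two_ne_zero]
    ring
  have hp0 : ∀ m, 0 ≤ p m := fun m => by
    have : (1 - 2 * q m) ^ n ≤ 1 := pow_le_one₀ (by linarith [hq1 m]) (by linarith [hq0 m])
    simp only [p]
    linarith
  have hMH : ∀ m, MH (ℓ m) (1 - 2 * q m) n (ℓ m / 2) (ℓ m / 2) =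
      ∑ k ∈ Finset.range (L m + 1), binomialWeight (L m) (p m) k ^ 2 := fun m => by
    have h := MH_two_mul_eq_sum_binomialWeight_sq (L m) (1 - 2 * q m) n
    rwa [Nat.two_mul_div_two_of_even (heven m)] at h
  have hphi : ∑' k, (exp (-(n * (a / 2))) * (n * (a / 2)) ^ k / k !) ^ 2 = Real.exp (-a * n) *
      ∑' k : ℕ, (a * n) ^ (2 * k) / (2 ^ (2 * k) * ((Nat.factorial k : ℝ)) ^ 2) := by
    rw [← tsum_mul_left]
    refine tsum_congr fun k => ?_
    rw [div_pow, mul_pow, ← exp_nat_mul, ← pow_mul, mul_comm k 2,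
      show (n * (a / 2) : ℝ) = a * n / 2 by ring, div_pow]
    push_cast
    ring_nf
  rw [← hphi]
  exact (tendsto_sum_binomialWeight_sq hL hLp (.of_forall hp0)).congr fun m => (hMH m).symm

/-- In the long chain regime `ℓ_m → ∞` (`ℓ_m` even), `q_m → 0`, `ℓ_m q_m → a`,
one has `M^n_H(ℓ_m/2, ℓ_m/2) → φ_n(a) = e^{-an} ∑_{k≥0} (an)^{2k}/(2^{2k}(k!)²)`,
where `ρ_m = 1 - 2 q_m`. -/
theorem MH_middle_tendsto_phi
    (n : ℕ) (hn : 1 ≤ n) (a : ℝ) (ha : 0 ≤ a)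
    (ℓ : ℕ → ℕ) (q : ℕ → ℝ)
    (hℓ : Tendsto ℓ atTop atTop) (heven : ∀ m, Even (ℓ m))
    (hq0 : ∀ m, 0 < q m) (hq1 : ∀ m, q m < 1 / 2)
    (hq : Tendsto q atTop (𝓝 0))
    (hlq : Tendsto (fun m => (ℓ m : ℝ) * q m) atTop (𝓝 a)) :
    Tendsto (fun m => MH (ℓ m) (1 - 2 * q m) n (ℓ m / 2) (ℓ m / 2)) atTop
      (𝓝 (Real.exp (-a * n) *
        ∑' k : ℕ, (a * n) ^ (2 * k) / (2 ^ (2 * k) * ((Nat.factorial k : ℝ)) ^ 2))) :=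
  MH_middle_tendsto_phi_general n a ℓ q hℓ heven hq0 hq1 hq hlq
end
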